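/- arXiv:2503.12997 — 6 statements merged into one kernel-verified Lean document; each statement's English description precedes it below -/
import Mathlib

section
/- Let Ω be a countably infinite set and let < be a linear order on Ω of order type ω (i.e. order-isomorphic to the natural numbers). If a subgroup G of Sym(Ω) acts transitively on the set of all linear orders on Ω of order type ω (where f ∈ Sym(Ω) sends an order <₁ to the order <₂ defined by f(a) <₂ f(b) ⟺ a <₁ b), then G = Sym(Ω). -/
/-- A binary relation on `Ω` is a linear order of order type `ω` if it is
order-isomorphic to the natural numbers with their usual order. -/
def OrderTypeOmega {Ω : Type} (r : Ω → Ω → Prop) : Prop :=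
  ∃ e : Ω ≃ ℕ, ∀ a b : Ω, r a b ↔ e a < e b

/-- If a subgroup `G` of `Sym(Ω)` acts transitively on the set of linear orders on `Ω`
of order type `ω` (by transport of structure), then `G` is all of `Sym(Ω)`. -/
theorem stmt_0 (Ω : Type) [Countable Ω] [Infinite Ω] (G : Subgroup (Equiv.Perm Ω))
    (htrans : ∀ r₁ r₂ : Ω → Ω → Prop, OrderTypeOmega r₁ → OrderTypeOmega r₂ →
      ∃ g ∈ G, ∀ a b : Ω, r₂ (g a) (g b) ↔ r₁ a b) :
    G = ⊤ := by
  rw [Subgroup.eq_top_iff']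
  intro σ
  obtain ⟨e⟩ : Nonempty (Ω ≃ ℕ) := nonempty_equiv_of_countable
  obtain ⟨g, hg, hgr⟩ := htrans (fun a b => e a < e b)
      (fun a b => e (σ⁻¹ a) < e (σ⁻¹ b))
      ⟨e, fun _ _ => Iff.rfl⟩
      ⟨(σ⁻¹ : Equiv.Perm Ω).trans e, fun _ _ => Iff.rfl⟩
  have hge : g = σ := by
    let f : ℕ ≃o ℕ :=
      { toEquiv := e.symm.trans (((g : Equiv.Perm Ω).trans
          ((σ⁻¹ : Equiv.Perm Ω).trans e)))
        map_rel_iff' := by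
          intro a b
          simp only [Equiv.coe_fn_mk, Equiv.trans_apply, ← not_lt]
          exact not_congr ((hgr _ _).trans (by simp)) }
    have hf : f = OrderIso.refl ℕ := Subsingleton.elim _ _
    ext a
    have := congrArg (fun (φ : ℕ ≃o ℕ) => φ (e a)) hf
    simp only [OrderIso.refl_apply] at this
    have : e (σ⁻¹ (g a)) = e a := by
      simpa [f, Equiv.trans_apply] using this
    have := e.injective this
    calc g a = σ (σ⁻¹ (g a)) := by simp
      _ = σ a := by rw [this]
  rwa [hge] at hg
end

section
/- There exists a countably infinite strongly independent subset 𝒥 of Sym(Ω) which is dense in Sym(Ω) with respect to the topology of pointwise convergence. -/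
/-! Identify `Ω` with the free group `F` on countably many generators `xₙ`, so that `F` acts
on `Ω` by left translation; this action is free, hence a nontrivial reduced word in distinct
translations by generators has no fixed point at all. Changing each translation by `xₙ` on
finitely many points does not affect this up to finitely many points, since permutations
that agree off a finite set form a congruence for products and inverses. The finite
changes are used to make the `n`-th permutation extend the `n`-th of an enumeration of
finite partial maps `Ω → Ω`, which gives density. -/

def StronglyIndependent {Ω : Type} (G : Set (Equiv.Perm Ω)) : Prop :=
  ∀ (n : ℕ) (w : FreeGroup (Fin (n + 1))), w ≠ 1 →
    ∀ f : Fin (n + 1) → Equiv.Perm Ω, Function.Injective f → (∀ i, f i ∈ G) →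
      {x : Ω | FreeGroup.lift f w x = x}.Finite

open Filter Function

namespace Equiv.Perm

variable {Ω : Type*}

lemma eventuallyEq_mul {a b c d : Perm Ω} (hab : ⇑a =ᶠ[cofinite] ⇑b)
    (hcd : ⇑c =ᶠ[cofinite] ⇑d) : ⇑(a * c) =ᶠ[cofinite] ⇑(b * d) := by
  rw [coe_mul, coe_mul]
  exact (hab.comp_tendsto c.injective.tendsto_cofinite).trans (hcd.fun_comp b)

lemma eventuallyEq_inv {a b : Perm Ω} (h : ⇑a =ᶠ[cofinite] ⇑b) :
    ⇑a⁻¹ =ᶠ[cofinite] ⇑b⁻¹ := by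
  have h' := eventuallyEq_mul (.refl _ ⇑b⁻¹) (eventuallyEq_mul h (.refl _ ⇑a⁻¹))
  rw [mul_inv_cancel, mul_one, inv_mul_cancel_left] at h'
  exact h'.symm

lemma swap_eventuallyEq_one [DecidableEq Ω] (a b : Ω) :
    ⇑(swap a b) =ᶠ[cofinite] ⇑(1 : Perm Ω) := by
  filter_upwards [eventually_cofinite_ne a, eventually_cofinite_ne b] with x hxa hxb
  exact swap_apply_of_ne_of_ne hxa hxb

lemma exists_eventuallyEq_eqOn (τ σ : Perm Ω) (S : Finset Ω) :
    ∃ g : Perm Ω, ⇑g =ᶠ[cofinite] ⇑τ ∧ Set.EqOn g σ S := by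
  classical
  induction S using Finset.induction_on with
  | empty => exact ⟨τ, .rfl, by simp⟩
  | @insert a S ha ih =>
    obtain ⟨g, hgτ, hgσ⟩ := ih
    refine ⟨swap (σ a) (g a) * g, ?_, ?_⟩
    · simpa only [one_mul] using eventuallyEq_mul (swap_eventuallyEq_one (σ a) (g a)) hgτ
    · intro b hb
      rcases Finset.mem_insert.mp hb with rfl | hbS
      · simp
      · have hba : b ≠ a := ne_of_mem_of_not_mem hbS ha
        have hgb : g b ≠ g a := g.injective.ne hba
        rw [mul_apply, swap_apply_of_ne_of_ne (hgσ hbS ▸ σ.injective.ne hba) hgb, hgσ hbS]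

lemma exists_dense_eventuallyEq [Countable Ω] (τ : ℕ → Perm Ω) :
    ∃ g : ℕ → Perm Ω, (∀ n, ⇑(g n) =ᶠ[cofinite] ⇑(τ n)) ∧
      ∀ (h : Perm Ω) (S : Finset Ω), ∃ n, Set.EqOn (g n) h S := by
  classical
  obtain ⟨q, hq⟩ := exists_surjective_nat (Finset (Ω × Ω))
  have (n : ℕ) : ∃ g : Perm Ω, ⇑g =ᶠ[cofinite] ⇑(τ n) ∧
      ∀ h : Perm Ω, (∀ p ∈ q n, h p.1 = p.2) → ∀ p ∈ q n, g p.1 = p.2 := by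
    by_cases H : ∃ h : Perm Ω, ∀ p ∈ q n, h p.1 = p.2
    · obtain ⟨h, hh⟩ := H
      obtain ⟨g, hgτ, hgh⟩ := exists_eventuallyEq_eqOn (τ n) h ((q n).image Prod.fst)
      exact ⟨g, hgτ, fun _ _ p hp ↦
        (hgh (Finset.mem_coe.2 (Finset.mem_image_of_mem _ hp))).trans (hh p hp)⟩
    · exact ⟨τ n, .rfl, fun h hh ↦ absurd ⟨h, hh⟩ H⟩
  choose g hgτ hg using this
  refine ⟨g, hgτ, fun h S ↦ ?_⟩
  obtain ⟨n, hn⟩ := hq (S.image fun a ↦ (a, h a))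
  have hgraph : ∀ p ∈ q n, h p.1 = p.2 := by
    simp only [hn, Finset.mem_image]
    rintro _ ⟨a, -, rfl⟩
    rfl
  exact ⟨n, fun a ha ↦ hg n h hgraph (a, h a) (hn ▸ Finset.mem_image_of_mem _ ha)⟩

variable {G : Type*} [Group G]

lemma exists_fixedPointFree_hom (e : Ω ≃ G) :
    ∃ ρ : G →* Perm Ω, ∀ v x, ρ v x = x → v = 1 := by
  refine ⟨(e.symm.permCongrHom : Perm G →* Perm Ω).comp (MulAction.toPermHom G G),
    fun v x hx ↦ ?_⟩
  have hx' : e.symm (v * e x) = e.symm (e x) := by simpa using hx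
  exact mul_eq_right.mp (e.symm.injective hx')

lemma injective_of_eventuallyEq_fixedPointFree [Infinite Ω] {ι : Type*}
    {ρ : FreeGroup ι →* Perm Ω} (hρ : ∀ v x, ρ v x = x → v = 1) {g : ι → Perm Ω}
    (hg : ∀ i, ⇑(g i) =ᶠ[cofinite] ⇑(ρ (FreeGroup.of i))) : Injective g := by
  intro i j hij
  obtain ⟨x, hx⟩ := ((hg i).symm.trans (hij ▸ hg j)).exists
  have hfix := hρ ((FreeGroup.of j)⁻¹ * FreeGroup.of i) x
    (by rw [map_mul, map_inv, mul_apply, hx]; exact symm_apply_apply _ x)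
  exact FreeGroup.of_injective (inv_mul_eq_one.mp hfix).symm

end Equiv.Perm

open Equiv (Perm)

lemma FreeGroup.lift_eventuallyEq_cofinite {Ω ι : Type*} {f f' : ι → Perm Ω}
    (h : ∀ i, ⇑(f i) =ᶠ[cofinite] ⇑(f' i)) (w : FreeGroup ι) :
    ⇑(FreeGroup.lift f w) =ᶠ[cofinite] ⇑(FreeGroup.lift f' w) := by
  induction w using FreeGroup.induction_on with
  | C1 => simp only [_root_.map_one, EventuallyEq.rfl]
  | of i => simpa only [lift_apply_of] using h i
  | inv_of i hi => simpa only [_root_.map_inv] using Perm.eventuallyEq_inv hi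
  | mul v v' hv hv' => simpa only [_root_.map_mul] using Perm.eventuallyEq_mul hv hv'

lemma stronglyIndependent_range_of_eventuallyEq {Ω : Type} {ι : Type*}
    {ρ : FreeGroup ι →* Perm Ω} (hρ : ∀ v x, ρ v x = x → v = 1) {g : ι → Perm Ω}
    (hg : ∀ i, ⇑(g i) =ᶠ[cofinite] ⇑(ρ (FreeGroup.of i))) :
    StronglyIndependent (Set.range g) := by
  intro n w hw f hf hfg
  choose k hk using hfg
  have hk_inj : Injective k := fun i j hij ↦ hf (by rw [← hk i, ← hk j, hij])
  have hkw : FreeGroup.map k w ≠ 1 := (map_ne_one_iff _ (FreeGroup.map_injective hk_inj)).mpr hw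
  have hρk : ρ (FreeGroup.map k w) = FreeGroup.lift (fun i ↦ ρ (FreeGroup.of (k i))) w :=
    FreeGroup.lift_unique (ρ.comp (FreeGroup.map k)) fun i ↦ by simp
  have hclose : ⇑(FreeGroup.lift f w) =ᶠ[cofinite] ⇑(ρ (FreeGroup.map k w)) :=
    hρk ▸ FreeGroup.lift_eventuallyEq_cofinite (fun i ↦ hk i ▸ hg (k i)) w
  exact (eventually_cofinite.mp hclose).subset fun x hx heq ↦ hkw (hρ _ x (heq ▸ hx))

/-- There exists a countably infinite strongly independent subset of `Sym(Ω)` which is dense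
in the topology of pointwise convergence: it meets every basic open set, i.e. for every
permutation `h` and finite `S ⊆ Ω` some member agrees with `h` on `S`. -/
theorem stmt_7 (Ω : Type) [Countable Ω] [Infinite Ω] :
    ∃ 𝒥 : Set (Equiv.Perm Ω), 𝒥.Countable ∧ 𝒥.Infinite ∧ StronglyIndependent 𝒥 ∧
      ∀ h : Equiv.Perm Ω, ∀ S : Finset Ω, ∃ g ∈ 𝒥, ∀ a ∈ S, g a = h a := by
  obtain ⟨e⟩ : Nonempty (Ω ≃ FreeGroup ℕ) := nonempty_equiv_of_countable
  obtain ⟨ρ, hρ⟩ := Perm.exists_fixedPointFree_hom e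
  obtain ⟨g, hgρ, hg_dense⟩ := Perm.exists_dense_eventuallyEq fun n ↦ ρ (FreeGroup.of n)
  refine ⟨Set.range g, Set.countable_range g,
    Set.infinite_range_of_injective (Perm.injective_of_eventuallyEq_fixedPointFree hρ hgρ),
    stronglyIndependent_range_of_eventuallyEq hρ hgρ, fun h S ↦ ?_⟩
  obtain ⟨n, hn⟩ := hg_dense h S
  exact ⟨g n, Set.mem_range_self n, fun a ha ↦ hn ha⟩
end

section
/- Let Ω be countably infinite, 𝒥_n = {f₁,…,f_n} a finite strongly independent subset of Sym(Ω) with pairwise distinct elements, and q a finite partial bijection of Ω. Then there exists q̄ ∈ Sym(Ω) ∖ 𝒥_n extending q such that 𝒥_n ∪ {q̄} is strongly independent. -/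
def IsPartialBijGraph {Ω : Type} (f : Set (Ω × Ω)) : Prop :=
  (∀ p ∈ f, ∀ q ∈ f, p.1 = q.1 → p.2 = q.2) ∧ (∀ p ∈ f, ∀ q ∈ f, p.2 = q.2 → p.1 = q.1)

/-!
`q̄` is the union of an increasing chain `q ⊆ p₀ ⊆ p₁ ⊆ ⋯` of finite partial bijections, built
back and forth so that every point eventually enters both domain and range. With the new letter `t`
interpreted by a finite partial bijection `p`, a word in `f₁, …, fₙ, t` acts on `Ω` as a relation.
Stage `N` adds one pair `(a, b)` whose new point avoids a finite set: the preimages of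
`dom p ∪ ran p ∪ {a}` and the fixed points of the nontrivial `f`-words of length at most `2N`
(finitely many words, each with finitely many fixed points by strong independence). Then no
cyclically reduced word `W` of length at most `N` gains a fixed point: an orbit of `W` through the
new pair continues, inside the reduced word `W ++ W`, along an `f`-word up to the next letter
`t^{±1}`, and that `f`-word would have to carry the new point into `dom p ∪ ran p ∪ {a}` or fix it.
So the fixed points of `W` under `q̄` are those under `p_N`: finitely many, since they lie in the
domain of `W` when `W` contains `t`, and by strong independence otherwise. Every nontrivial element
of the free group is conjugate to a cyclically reduced word.
-/

open SetRel

namespace FreeGroup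

variable {α Ω : Type*}

/-- Letters act from right to left, as in `FreeGroup.lift`. -/
def wordRel (r : α → SetRel Ω Ω) : List (α × Bool) → SetRel Ω Ω
  | [] => .id
  | c :: L => wordRel r L ○ bif c.2 then r c.1 else (r c.1).inv

variable (r : α → SetRel Ω Ω)

@[simp] theorem wordRel_nil : wordRel r [] = .id := rfl

@[simp] theorem wordRel_cons_true (a : α) (L : List (α × Bool)) :
    wordRel r ((a, true) :: L) = wordRel r L ○ r a := rfl

@[simp] theorem wordRel_cons_false (a : α) (L : List (α × Bool)) :
    wordRel r ((a, false) :: L) = wordRel r L ○ (r a).inv := rfl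

theorem wordRel_append (L₁ L₂ : List (α × Bool)) :
    wordRel r (L₁ ++ L₂) = wordRel r L₂ ○ wordRel r L₁ := by
  induction L₁ with
  | nil => simp
  | cons c L ih => rw [List.cons_append, wordRel, wordRel, ih, comp_assoc]

theorem wordRel_invRev (L : List (α × Bool)) : wordRel r (invRev L) = (wordRel r L).inv := by
  induction L with
  | nil => simp
  | cons c L ih =>
    rw [invRev_cons, wordRel_append, ih]
    obtain ⟨a, _ | _⟩ := c <;> simp [invRev]

theorem wordRel_map {β : Type*} (φ : β → α) (L : List (β × Bool)) :
    wordRel r (L.map fun x => (φ x.1, x.2)) = wordRel (r ∘ φ) L := by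
  induction L with
  | nil => rfl
  | cons c L ih => rw [List.map_cons, wordRel, wordRel, ih]; rfl

theorem wordRel_mono {r r' : α → SetRel Ω Ω} (h : ∀ a, r a ⊆ r' a) (L : List (α × Bool)) :
    wordRel r L ⊆ wordRel r' L := by
  induction L with
  | nil => rfl
  | cons c L ih =>
    obtain ⟨a, _ | _⟩ := c
    · exact comp_subset_comp ih (Set.preimage_mono (h a))
    · exact comp_subset_comp ih (h a)

theorem wordRel_graph (g : α → Equiv.Perm Ω) (L : List (α × Bool)) :
    wordRel (fun a => Function.graph (g a)) L = Function.graph (lift g (mk L)) := by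
  induction L with
  | nil => ext ⟨x, y⟩; simp
  | cons c L ih =>
    obtain ⟨a, _ | _⟩ := c <;>
    simp [ih, Function.graph_comp, Equiv.Perm.coe_inv, Equiv.graph_inv]

theorem wordRel_iUnion {r : ℕ → α → SetRel Ω Ω} (hr : Monotone r) (L : List (α × Bool)) :
    wordRel (fun a => ⋃ s, r s a) L = ⋃ s, wordRel (r s) L := by
  refine subset_antisymm ?_ (Set.iUnion_subset fun s => wordRel_mono
    (fun a => Set.subset_iUnion (fun s => r s a) s) L)
  induction L with
  | nil => exact fun _ h => Set.mem_iUnion.2 ⟨0, h⟩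
  | cons c L ih =>
    rintro ⟨x, y⟩ ⟨z, hxz, hzy⟩
    obtain ⟨s₁, h₁⟩ := Set.mem_iUnion.1 (ih hxz)
    obtain ⟨s₂, h₂⟩ : ∃ s, (z, y) ∈ bif c.2 then r s c.1 else (r s c.1).inv := by
      obtain ⟨a, _ | _⟩ := c <;> simpa using hzy
    refine Set.mem_iUnion.2 ⟨max s₁ s₂, z, wordRel_mono (hr (le_max_left _ _)) L h₁, ?_⟩
    have := hr (le_max_right s₁ s₂) c.1
    obtain ⟨a, _ | _⟩ := c
    · exact Set.preimage_mono this h₂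
    · exact this h₂

theorem IsReduced.of_map {β : Type*} {φ : β → α} {L : List (β × Bool)}
    (h : IsReduced (L.map fun x => (φ x.1, x.2))) : IsReduced L :=
  (List.isChain_map _).1 h |>.imp fun _ _ hab heq => hab (congrArg φ heq)

variable [DecidableEq α] {L : List (α × Bool)}

theorem IsReduced.eq_nil_of_mk_eq_one (h : IsReduced L) (h1 : mk L = 1) : L = [] := by
  rw [← h.reduce_eq, ← toWord_mk, h1, toWord_one]

theorem IsReduced.invRev (h : IsReduced L) : IsReduced (invRev L) := by
  rw [isReduced_iff_reduce_eq, reduce_invRev, h.reduce_eq]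

end FreeGroup

open FreeGroup hiding map_mul map_inv

theorem Set.Finite.dom_union_cod {Ω : Type*} {p : SetRel Ω Ω} (hp : p.Finite) :
    (p.dom ∪ p.cod).Finite := by
  refine ((hp.image Prod.fst).subset ?_).union ((hp.image Prod.snd).subset ?_)
  · rintro a ⟨b, h⟩
    exact ⟨_, h, rfl⟩
  · rintro b ⟨a, h⟩
    exact ⟨_, h, rfl⟩

namespace IsPartialBijGraph

variable {Ω : Type} {p : SetRel Ω Ω}

theorem inv (hp : IsPartialBijGraph p) : IsPartialBijGraph p.inv :=
  ⟨fun _ hu _ hv h => hp.2 _ hu _ hv h, fun _ hu _ hv h => hp.1 _ hu _ hv h⟩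

theorem insert (hp : IsPartialBijGraph p) {a b : Ω} (ha : a ∉ p.dom) (hb : b ∉ p.cod) :
    IsPartialBijGraph (insert (a, b) p) := by
  obtain ⟨h₁, h₂⟩ := hp
  simp only [mem_dom, mem_cod, not_exists] at ha hb
  constructor <;> rintro ⟨u, v⟩ (huv | huv) ⟨u', v'⟩ (huv' | huv') h <;> grind

theorem iUnion {P : ℕ → SetRel Ω Ω} (hP : Monotone P) (h : ∀ s, IsPartialBijGraph (P s)) :
    IsPartialBijGraph (⋃ s, P s) := by
  have key : ∀ u ∈ ⋃ s, P s, ∀ v ∈ ⋃ s, P s, ∃ s, u ∈ P s ∧ v ∈ P s := by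
    intro u hu v hv
    obtain ⟨s₁, hu⟩ := Set.mem_iUnion.1 hu
    obtain ⟨s₂, hv⟩ := Set.mem_iUnion.1 hv
    exact ⟨max s₁ s₂, hP (le_max_left _ _) hu, hP (le_max_right _ _) hv⟩
  constructor
  · intro u hu v hv
    obtain ⟨s, hu, hv⟩ := key u hu v hv
    exact (h s).1 u hu v hv
  · intro u hu v hv
    obtain ⟨s, hu, hv⟩ := key u hu v hv
    exact (h s).2 u hu v hv

theorem exists_perm_graph_eq (hp : IsPartialBijGraph p) (hdom : ∀ x, x ∈ p.dom)
    (hcod : ∀ y, y ∈ p.cod) : ∃ t : Equiv.Perm Ω, Function.graph t = p := by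
  obtain ⟨f, hf, -⟩ := (exists_graph_eq_iff p).2 fun x =>
    (hdom x).elim fun y hy => ⟨y, hy, fun y' hy' => hp.1 _ hy' _ hy rfl⟩
  obtain ⟨g, hg, -⟩ := (exists_graph_eq_iff p.inv).2 fun y =>
    (hcod y).elim fun x hx => ⟨x, hx, fun x' hx' => hp.2 _ hx' _ hx rfl⟩
  have hfg : ∀ x y, f x = y ↔ g y = x := fun x y => by
    rw [← Function.mem_graph, ← Function.mem_graph, hf, hg]; rfl
  exact ⟨⟨f, g, fun x => (hfg x _).1 rfl, fun y => (hfg _ y).2 rfl⟩, hf⟩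

end IsPartialBijGraph

def StronglyIndependentFamily {α Ω : Type*} (g : α → Equiv.Perm Ω) : Prop :=
  ∀ w : FreeGroup α, w ≠ 1 → (MulAction.fixedBy Ω (lift g w)).Finite

namespace StronglyIndependentFamily

variable {α Ω : Type*} {g : α → Equiv.Perm Ω}

theorem of_isCyclicallyReduced [DecidableEq α]
    (h : ∀ L : List (α × Bool), IsCyclicallyReduced L → L ≠ [] →
      (MulAction.fixedBy Ω (lift g (mk L))).Finite) :
    StronglyIndependentFamily g := by
  intro w hw
  set c := mk (reduceCyclically.conjugator w.toWord)
  have hw' : w = c * mk (reduceCyclically w.toWord) * c⁻¹ := by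
    rw [inv_mk, mul_mk, mul_mk, reduceCyclically.conj_conjugator_reduceCyclically, mk_toWord]
  have hne : reduceCyclically w.toWord ≠ [] := by
    rintro hnil
    rw [hnil, ← one_eq_mk, mul_one, mul_inv_cancel] at hw'
    exact hw hw'
  rw [hw', map_mul, map_mul, map_inv, ← MulAction.smul_fixedBy]
  exact (h _ (reduceCyclically.isCyclicallyReduced isReduced_toWord) hne).smul_set

theorem injective [Infinite Ω] (h : StronglyIndependentFamily g) : Function.Injective g := by
  intro a b hab
  by_contra hne
  have hw : of a * (of b)⁻¹ ≠ 1 := by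
    rw [Ne, mul_inv_eq_one, of_injective.eq_iff]
    exact hne
  have := h _ hw
  rw [map_mul, map_inv, lift_apply_of, lift_apply_of, hab, mul_inv_cancel,
    MulAction.fixedBy_one_eq_univ] at this
  exact Set.infinite_univ this

theorem stronglyIndependent_range {Ω : Type} {g : α → Equiv.Perm Ω}
    (h : StronglyIndependentFamily g) : StronglyIndependent (Set.range g) := by
  intro m w hw f hf hfg
  choose φ hφ using hfg
  have hlift : lift f = (lift g).comp (map φ) := by
    ext i
    simp [hφ]
  have hφinj : Function.Injective φ := fun i j hij => hf (by rw [← hφ i, ← hφ j, hij])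
  have := h (map φ w) fun h1 => hw (map_injective hφinj (h1.trans (map φ).map_one.symm))
  rw [hlift]
  exact this

end StronglyIndependentFamily

theorem StronglyIndependent.stronglyIndependentFamily {Ω : Type} {n : ℕ}
    {f : Fin n → Equiv.Perm Ω} (hf : Function.Injective f)
    (h : StronglyIndependent (Set.range f)) : StronglyIndependentFamily f := by
  intro w hw
  cases n with
  | zero => exact absurd (Subsingleton.elim w 1) hw
  | succ m => exact h m w hw f hf Set.mem_range_self

section

variable {ι Ω : Type*} (f : ι → Equiv.Perm Ω)

/-- The letter `none` stands for the permutation under construction, approximated by `p`. -/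
def adjoinRel (p : SetRel Ω Ω) (o : Option ι) : SetRel Ω Ω :=
  o.elim p fun i => Function.graph (f i)

theorem adjoinRel_mono {p p' : SetRel Ω Ω} (h : p ⊆ p') (o : Option ι) :
    adjoinRel f p o ⊆ adjoinRel f p' o := by
  cases o
  · exact h
  · exact subset_rfl

theorem adjoinRel_graph (t : Equiv.Perm Ω) :
    adjoinRel f (Function.graph t) = fun o => Function.graph ⇑(o.elim t f : Equiv.Perm Ω) := by
  funext o
  cases o <;> rfl

theorem wordRel_adjoinRel_map_some (p : SetRel Ω Ω) (M : List (ι × Bool)) :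
    wordRel (adjoinRel f p) (M.map fun x => (some x.1, x.2)) = Function.graph (lift f (mk M)) :=
  (wordRel_map _ some M).trans (wordRel_graph f M)

def flipNone (W : List (Option ι × Bool)) : List (Option ι × Bool) :=
  W.map fun x => (x.1, x.2 ^^ x.1.isNone)

@[simp] theorem flipNone_flipNone (W : List (Option ι × Bool)) : flipNone (flipNone W) = W := by
  simp [flipNone, Function.comp_def]

theorem FreeGroup.IsReduced.flipNone {W : List (Option ι × Bool)} (h : IsReduced W) :
    IsReduced (flipNone W) := by
  refine List.isChain_map_of_isChain _ (fun a b hab heq => ?_) h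
  simp only at heq ⊢
  rw [heq, hab heq]

theorem wordRel_adjoinRel_inv (p : SetRel Ω Ω) (W : List (Option ι × Bool)) :
    wordRel (adjoinRel f p.inv) W = wordRel (adjoinRel f p) (flipNone W) := by
  induction W with
  | nil => rfl
  | cons c W ih =>
    obtain ⟨_ | i, _ | _⟩ := c <;> simp [flipNone, ih, adjoinRel]

theorem eq_map_some_or_eq_append_none (W : List (Option ι × Bool)) :
    (∃ M : List (ι × Bool), W = M.map fun x => (some x.1, x.2)) ∨
      ∃ L s, ∃ M : List (ι × Bool), W = L ++ (none, s) :: M.map fun x => (some x.1, x.2) := by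
  induction W with
  | nil => exact Or.inl ⟨[], rfl⟩
  | cons c W ih =>
    rcases ih with ⟨M, rfl⟩ | ⟨L, s, M, rfl⟩
    · obtain ⟨_ | i, b⟩ := c
      · exact Or.inr ⟨[], b, M, rfl⟩
      · exact Or.inl ⟨(i, b) :: M, rfl⟩
    · exact Or.inr ⟨c :: L, s, M, rfl⟩

theorem finite_fixed_wordRel [DecidableEq ι] (hf : StronglyIndependentFamily f)
    {p : SetRel Ω Ω} (hp : p.Finite) {W : List (Option ι × Bool)} (hW : IsReduced W)
    (hne : W ≠ []) : {x | (x, x) ∈ wordRel (adjoinRel f p) W}.Finite := by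
  rcases eq_map_some_or_eq_append_none W with ⟨M, rfl⟩ | ⟨L, s, M, rfl⟩
  · refine (hf (mk M) fun h1 => hne ?_).subset fun x hx => ?_
    · rw [hW.of_map.eq_nil_of_mk_eq_one h1, List.map_nil]
    · rwa [wordRel_adjoinRel_map_some] at hx
  · refine (hp.dom_union_cod.preimage (lift f (mk M)).injective.injOn).subset ?_
    rintro x hx
    rw [wordRel_append] at hx
    obtain ⟨z, ⟨y, hxy, hyz⟩, -⟩ := hx
    rw [wordRel_adjoinRel_map_some, Function.mem_graph] at hxy
    subst hxy
    cases s
    · exact Or.inr ⟨_, hyz⟩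
    · exact Or.inl ⟨_, hyz⟩

def IsFresh (N : ℕ) (S : Set Ω) (b : Ω) : Prop :=
  ∀ M : List (ι × Bool), M.length ≤ N →
    lift f (mk M) b ∉ S ∧ (mk M ≠ 1 → lift f (mk M) b ≠ b)

theorem exists_isFresh [Finite ι] [Infinite Ω] (hf : StronglyIndependentFamily f) (N : ℕ)
    {S : Set Ω} (hS : S.Finite) : ∃ b, IsFresh f N S b := by
  have hbad : (⋃ M ∈ {M : List (ι × Bool) | M.length ≤ N},
      (lift f (mk M)) ⁻¹' S ∪ {x | mk M ≠ 1 ∧ lift f (mk M) x = x}).Finite :=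
    (List.finite_length_le _ N).biUnion fun M _ =>
      (hS.preimage (lift f (mk M)).injective.injOn).union
        (by
          by_cases h : mk M = 1
          · simp [h]
          · exact (hf _ h).subset fun x hx => hx.2)
  obtain ⟨b, hb⟩ := hbad.infinite_compl.nonempty
  exact ⟨b, fun M hM => ⟨fun h => hb (Set.mem_biUnion hM (Or.inl h)),
    fun h1 h => hb (Set.mem_biUnion hM (Or.inr ⟨h1, h⟩))⟩⟩

variable {f} {p : SetRel Ω Ω} {a b : Ω}

theorem IsFresh.mono {N N' : ℕ} {S : Set Ω} (h : IsFresh f N' S b) (hN : N ≤ N') :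
    IsFresh f N S b :=
  fun M hM => h M (hM.trans hN)

theorem IsFresh.notMem {N : ℕ} {S : Set Ω} (h : IsFresh f N S b) : b ∉ S := by
  simpa [← one_eq_mk] using (h [] (Nat.zero_le N)).1

theorem IsFresh.notMem_dom [DecidableEq ι] {V : List (Option ι × Bool)}
    (hb : IsFresh f V.length (p.dom ∪ p.cod ∪ {a}) b) (hV : IsReduced (V ++ [(none, true)]))
    (hnone : ∃ s, (none, s) ∈ V) : b ∉ (wordRel (adjoinRel f (insert (a, b) p)) V).dom := by
  rintro ⟨y, hy⟩
  rcases eq_map_some_or_eq_append_none V with ⟨M, rfl⟩ | ⟨L, s, M, rfl⟩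
  · obtain ⟨s, hs⟩ := hnone
    simp at hs
  rw [wordRel_append] at hy
  obtain ⟨z, ⟨w, hbw, hwz⟩, -⟩ := hy
  rw [wordRel_adjoinRel_map_some, Function.mem_graph] at hbw
  subst hbw
  obtain ⟨hS, hfix⟩ := hb M (by simp; omega)
  cases s
  · rcases hwz with hwz | hwz
    · obtain ⟨-, hwb⟩ := Prod.mk.inj (hwz : (z, _) = (a, b))
      have hMred : IsReduced M := IsReduced.of_map (φ := some)
        (hV.infix ⟨L ++ [(none, false)], [(none, true)], by simp⟩)
      obtain rfl : M = [] := hMred.eq_nil_of_mk_eq_one (not_imp_comm.1 hfix (not_not.2 hwb))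
      have := hV.infix (L₁ := [(none, false), (none, true)]) ⟨L, [], by simp⟩
      simp [FreeGroup.IsReduced] at this
    · exact hS (Or.inl (Or.inr ⟨z, hwz⟩))
  · rcases hwz with hwz | hwz
    · exact hS (Or.inr (Prod.mk.inj hwz).1)
    · exact hS (Or.inl (Or.inl ⟨z, hwz⟩))

theorem IsFresh.notMem_cod [DecidableEq ι] {V : List (Option ι × Bool)}
    (hb : IsFresh f V.length (p.dom ∪ p.cod ∪ {a}) b) (hV : IsReduced ((none, false) :: V))
    (hnone : ∃ s, (none, s) ∈ V) : b ∉ (wordRel (adjoinRel f (insert (a, b) p)) V).cod := by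
  rw [← dom_inv, ← wordRel_invRev]
  refine hb.mono invRev_length.le |>.notMem_dom ?_ ?_
  · simpa [invRev] using hV.invRev
  · obtain ⟨s, hs⟩ := hnone
    exact ⟨!s, by simpa [invRev] using hs⟩

theorem mem_wordRel_insert {W : List (Option ι × Bool)} {x y : Ω}
    (h : (x, y) ∈ wordRel (adjoinRel f (insert (a, b) p)) W) :
    (x, y) ∈ wordRel (adjoinRel f p) W ∨
      (∃ W₁ W₂, W = W₁ ++ (none, true) :: W₂ ∧
        (x, a) ∈ wordRel (adjoinRel f (insert (a, b) p)) W₂ ∧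
        (b, y) ∈ wordRel (adjoinRel f (insert (a, b) p)) W₁) ∨
      ∃ W₁ W₂, W = W₁ ++ (none, false) :: W₂ ∧
        (x, b) ∈ wordRel (adjoinRel f (insert (a, b) p)) W₂ ∧
        (a, y) ∈ wordRel (adjoinRel f (insert (a, b) p)) W₁ := by
  induction W generalizing y with
  | nil => exact Or.inl h
  | cons c W ih =>
    obtain ⟨z, hxz, hzy⟩ := h
    rcases ih hxz with hold | ⟨W₁, W₂, rfl, h₁, h₂⟩ | ⟨W₁, W₂, rfl, h₁, h₂⟩
    · have hnew : (x, z) ∈ wordRel (adjoinRel f (insert (a, b) p)) W :=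
        wordRel_mono (adjoinRel_mono f (Set.subset_insert _ _)) W hold
      obtain ⟨_ | i, _ | _⟩ := c
      · rcases hzy with hzy | hzy
        · obtain ⟨rfl, rfl⟩ := Prod.mk.inj (hzy : (y, z) = (a, b))
          exact Or.inr (Or.inr ⟨[], W, rfl, hnew, rfl⟩)
        · exact Or.inl ⟨z, hold, hzy⟩
      · rcases hzy with hzy | hzy
        · obtain ⟨rfl, rfl⟩ := Prod.mk.inj hzy
          exact Or.inr (Or.inl ⟨[], W, rfl, hnew, rfl⟩)
        · exact Or.inl ⟨z, hold, hzy⟩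
      · exact Or.inl ⟨z, hold, hzy⟩
      · exact Or.inl ⟨z, hold, hzy⟩
    · exact Or.inr (Or.inl ⟨c :: W₁, W₂, rfl, h₁, z, h₂, hzy⟩)
    · exact Or.inr (Or.inr ⟨c :: W₁, W₂, rfl, h₁, z, h₂, hzy⟩)

theorem IsFresh.mem_wordRel_of_mem_insert [DecidableEq ι] {W : List (Option ι × Bool)} {x : Ω}
    (hb : IsFresh f (2 * W.length) (p.dom ∪ p.cod ∪ {a}) b) (hW : IsReduced (W ++ W))
    (hx : (x, x) ∈ wordRel (adjoinRel f (insert (a, b) p)) W) :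
    (x, x) ∈ wordRel (adjoinRel f p) W := by
  rcases mem_wordRel_insert hx with h | ⟨W₁, W₂, rfl, h₁, h₂⟩ | ⟨W₁, W₂, rfl, h₁, h₂⟩
  · exact h
  · -- after `a ↦ b` the orbit of the fixed point `x` runs on through `W₁` and then all of `W`
    have hdom : b ∈ (wordRel (adjoinRel f (insert (a, b) p))
        (W₁ ++ (none, true) :: W₂ ++ W₁)).dom :=
      ⟨x, by rw [wordRel_append]; exact ⟨x, h₂, hx⟩⟩
    exact absurd hdom <| (hb.mono (by simp; omega)).notMem_dom
      (hW.infix ⟨[], W₂, by simp⟩) ⟨true, by simp⟩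
  · -- before `b ↦ a` the orbit of the fixed point `x` has run through all of `W` and then `W₂`
    have hcod : b ∈ (wordRel (adjoinRel f (insert (a, b) p))
        (W₂ ++ (W₁ ++ (none, false) :: W₂))).cod :=
      ⟨x, by rw [wordRel_append]; exact ⟨x, hx, h₁⟩⟩
    exact absurd hcod <| (hb.mono (by simp; omega)).notMem_cod
      (hW.infix ⟨W₁, [], by simp⟩) ⟨false, by simp⟩

end

section

variable {ι : Type*} {Ω : Type} (f : ι → Equiv.Perm Ω)

/-- `IsReduced (W ++ W)` says that `W` is cyclically reduced. -/
def AddsNoFixedPoints (N : ℕ) (p p' : SetRel Ω Ω) : Prop :=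
  ∀ W : List (Option ι × Bool), IsReduced (W ++ W) → W.length ≤ N →
    ∀ x, (x, x) ∈ wordRel (adjoinRel f p') W → (x, x) ∈ wordRel (adjoinRel f p) W

variable {f}

theorem AddsNoFixedPoints.trans {N : ℕ} {p₁ p₂ p₃ : SetRel Ω Ω}
    (h₁₂ : AddsNoFixedPoints f N p₁ p₂) (h₂₃ : AddsNoFixedPoints f N p₂ p₃) :
    AddsNoFixedPoints f N p₁ p₃ :=
  fun W hW hN x hx => h₁₂ W hW hN x (h₂₃ W hW hN x hx)

theorem mem_wordRel_of_mem_wordRel_iUnion {P : ℕ → SetRel Ω Ω} (hP : Monotone P)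
    (hfix : ∀ s, AddsNoFixedPoints f s (P s) (P (s + 1))) {W : List (Option ι × Bool)}
    (hW : IsReduced (W ++ W)) {x : Ω} (hx : (x, x) ∈ wordRel (adjoinRel f (⋃ s, P s)) W) :
    (x, x) ∈ wordRel (adjoinRel f (P W.length)) W := by
  have hU : adjoinRel f (⋃ s, P s) = fun o => ⋃ s, adjoinRel f (P s) o := by
    funext o
    cases o
    · rfl
    · exact (Set.iUnion_const _).symm
  rw [hU, wordRel_iUnion (fun s s' h => adjoinRel_mono f (hP h))] at hx
  obtain ⟨s, hs⟩ := Set.mem_iUnion.1 hx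
  obtain hle | hlt := le_total s W.length
  · exact wordRel_mono (adjoinRel_mono f (hP hle)) W hs
  obtain ⟨k, rfl⟩ := Nat.exists_eq_add_of_le hlt
  induction k with
  | zero => exact hs
  | succ k ih => exact ih (hfix _ W hW (by omega) x hs) (by omega)

variable [Finite ι] [Infinite Ω] {p : SetRel Ω Ω}

theorem exists_extension_dom (hf : StronglyIndependentFamily f) (hp : IsPartialBijGraph p)
    (hpfin : p.Finite) (a : Ω) (N : ℕ) :
    ∃ p' : SetRel Ω Ω, p ⊆ p' ∧ IsPartialBijGraph p' ∧ p'.Finite ∧ a ∈ p'.dom ∧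
      AddsNoFixedPoints f N p p' := by
  classical
  by_cases ha : a ∈ p.dom
  · exact ⟨p, subset_rfl, hp, hpfin, ha, fun W _ _ x hx => hx⟩
  obtain ⟨b, hb⟩ := exists_isFresh f hf (2 * N)
    (hpfin.dom_union_cod.union (Set.finite_singleton a))
  refine ⟨insert (a, b) p, Set.subset_insert _ _,
    hp.insert ha fun hbp => hb.notMem (by simp [hbp]), hpfin.insert _, ⟨b, Set.mem_insert _ _⟩,
    fun W hW hWN x hx => ?_⟩
  exact (hb.mono (by omega)).mem_wordRel_of_mem_insert hW hx

theorem exists_extension_cod (hf : StronglyIndependentFamily f) (hp : IsPartialBijGraph p)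
    (hpfin : p.Finite) (b : Ω) (N : ℕ) :
    ∃ p' : SetRel Ω Ω, p ⊆ p' ∧ IsPartialBijGraph p' ∧ p'.Finite ∧ b ∈ p'.cod ∧
      AddsNoFixedPoints f N p p' := by
  have hswap : Set.InjOn Prod.swap (Set.univ : Set (Ω × Ω)) := Prod.swap_injective.injOn
  obtain ⟨p', hpp', hp', hp'fin, hb, hfix⟩ :=
    exists_extension_dom hf hp.inv (hpfin.preimage (hswap.mono (Set.subset_univ _))) b N
  refine ⟨p'.inv, fun u hu => hpp' hu, hp'.inv, hp'fin.preimage (hswap.mono (Set.subset_univ _)),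
    hb, fun W hW hWN x hx => ?_⟩
  -- exchanging `t` and `t⁻¹` turns the range extension into a domain extension
  rw [wordRel_adjoinRel_inv] at hx
  have := hfix (flipNone W) (by simpa [flipNone] using hW.flipNone) (by simpa [flipNone]) x hx
  rwa [wordRel_adjoinRel_inv, flipNone_flipNone] at this

theorem exists_extension (hf : StronglyIndependentFamily f) (hp : IsPartialBijGraph p)
    (hpfin : p.Finite) (c : Ω) (N : ℕ) :
    ∃ p' : SetRel Ω Ω, p ⊆ p' ∧ IsPartialBijGraph p' ∧ p'.Finite ∧ c ∈ p'.dom ∧ c ∈ p'.cod ∧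
      AddsNoFixedPoints f N p p' := by
  obtain ⟨p₁, hpp₁, hp₁, hp₁fin, ⟨d, hcd⟩, hfix₁⟩ := exists_extension_dom hf hp hpfin c N
  obtain ⟨p₂, hp₁p₂, hp₂, hp₂fin, hc, hfix₂⟩ := exists_extension_cod hf hp₁ hp₁fin c N
  exact ⟨p₂, hpp₁.trans hp₁p₂, hp₂, hp₂fin, ⟨d, hp₁p₂ hcd⟩, hc, hfix₁.trans hfix₂⟩

theorem exists_extension_chain [Countable Ω] (hf : StronglyIndependentFamily f)
    {q : SetRel Ω Ω} (hq : IsPartialBijGraph q) (hqfin : q.Finite) :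
    ∃ P : ℕ → SetRel Ω Ω, Monotone P ∧ q ⊆ P 0 ∧
      (∀ s, IsPartialBijGraph (P s) ∧ (P s).Finite) ∧
      (∀ x, ∃ s, x ∈ (P s).dom ∧ x ∈ (P s).cod) ∧
      ∀ s, AddsNoFixedPoints f s (P s) (P (s + 1)) := by
  obtain ⟨e, he⟩ := exists_surjective_nat Ω
  choose! ext hsub hbij hfin hdom hcod hfix using
    fun (p : SetRel Ω Ω) (hp : IsPartialBijGraph p) (hpfin : p.Finite) =>
      exists_extension hf hp hpfin
  let P : ℕ → SetRel Ω Ω := fun s => Nat.rec (motive := fun _ => SetRel Ω Ω) q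
    (fun s p => ext p (e s) s) s
  have hP : ∀ s, IsPartialBijGraph (P s) ∧ (P s).Finite := by
    intro s
    induction s with
    | zero => exact ⟨hq, hqfin⟩
    | succ s ih => exact ⟨hbij _ ih.1 ih.2 _ _, hfin _ ih.1 ih.2 _ _⟩
  refine ⟨P, monotone_nat_of_le_succ fun s => hsub _ (hP s).1 (hP s).2 _ _, subset_rfl, hP,
    fun x => ?_, fun s => hfix _ (hP s).1 (hP s).2 _ _⟩
  obtain ⟨s, rfl⟩ := he x
  exact ⟨s + 1, hdom _ (hP s).1 (hP s).2 _ _, hcod _ (hP s).1 (hP s).2 _ _⟩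

theorem exists_perm_extension [Countable Ω] (hf : StronglyIndependentFamily f)
    {q : SetRel Ω Ω} (hq : IsPartialBijGraph q) (hqfin : q.Finite) :
    ∃ t : Equiv.Perm Ω, q ⊆ Function.graph t ∧
      StronglyIndependentFamily fun o : Option ι => o.elim t f := by
  classical
  obtain ⟨P, hmono, hq0, hP, hcover, hfix⟩ := exists_extension_chain hf hq hqfin
  obtain ⟨t, ht⟩ := (IsPartialBijGraph.iUnion hmono fun s => (hP s).1).exists_perm_graph_eq
    (fun x => by
      obtain ⟨s, ⟨y, hy⟩, -⟩ := hcover x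
      exact ⟨y, Set.mem_iUnion.2 ⟨s, hy⟩⟩)
    (fun y => by
      obtain ⟨s, -, ⟨x, hx⟩⟩ := hcover y
      exact ⟨x, Set.mem_iUnion.2 ⟨s, hx⟩⟩)
  refine ⟨t, ht ▸ hq0.trans (Set.subset_iUnion P 0),
    .of_isCyclicallyReduced fun L hL hne => ?_⟩
  have hLL : IsReduced (L ++ L) := by simpa using (hL.flatten_replicate 2).isReduced
  refine (finite_fixed_wordRel f hf (hP L.length).2 hL.isReduced hne).subset fun x hx => ?_
  refine mem_wordRel_of_mem_wordRel_iUnion hmono hfix hLL ?_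
  rw [← ht, adjoinRel_graph, wordRel_graph]
  exact hx

end

/-- Given a finite strongly independent set `𝒥ₙ = {f₁,…,fₙ}` of pairwise distinct permutations
of a countably infinite set `Ω` and a finite partial bijection `q` of `Ω`, there is a
permutation `q̄ ∉ 𝒥ₙ` extending `q` with `𝒥ₙ ∪ {q̄}` strongly independent. -/
theorem stmt_8 (Ω : Type) [Countable Ω] [Infinite Ω] (n : ℕ) (f : Fin n → Equiv.Perm Ω)
    (hinj : Function.Injective f) (hsi : StronglyIndependent (Set.range f))
    (q : Set (Ω × Ω)) (hqfin : q.Finite) (hq : IsPartialBijGraph q) :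
    ∃ qb : Equiv.Perm Ω, qb ∉ Set.range f ∧ (∀ p ∈ q, qb p.1 = p.2) ∧
      StronglyIndependent (insert qb (Set.range f)) := by
  obtain ⟨t, hqt, ht⟩ :=
    exists_perm_extension (StronglyIndependent.stronglyIndependentFamily hinj hsi) hq hqfin
  refine ⟨t, ?_, fun p hp => hqt hp, ?_⟩
  · rintro ⟨i, hi⟩
    exact Option.some_ne_none i (ht.injective hi)
  · rw [← Option.range_elim]
    exact ht.stronglyIndependent_range
end

section
/- Suppose that for every strongly independent set 𝒢 ⊆ Sym(Ω) of cardinality less than 2^{ℵ₀} and every pair of isomorphic inductively flexible structures M₁, M₂ with universe Ω there exists an isomorphism f : M₁ → M₂ with 𝒢 ∪ {f} strongly independent. Then there exists a proper dense subgroup G ≤ Sym(Ω) such that for any pair of isomorphic inductively flexible structures M, M′ with universe Ω, some f ∈ G is an isomorphism from M to M′. -/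
def FlexibleWitness {Ω : Type} (Aut : Set (Equiv.Perm Ω)) (F : Set (Set (Ω × Ω))) : Prop :=
  (∀ f ∈ F, Set.Finite f) ∧
  (∀ f ∈ F, ∃ g ∈ Aut, ∀ p ∈ f, g p.1 = p.2) ∧
  ∅ ∈ F ∧
  (∀ f ∈ F, Prod.swap '' f ∈ F) ∧
  (∀ f ∈ F, ∀ a : Ω, a ∉ Prod.fst '' f → {b : Ω | insert (a, b) f ∈ F}.Infinite)

/-- A relational structure on universe `Ω` with relation symbols indexed by `I` of arities `ar`. -/
structure RelStruct (Ω I : Type) (ar : I → ℕ) where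
  rel : ∀ i : I, (Fin (ar i) → Ω) → Prop

/-- `g` is an isomorphism from `M` to `N` (both with universe `Ω`), by transport of structure. -/
def IsIso {Ω I : Type} {ar : I → ℕ} (g : Equiv.Perm Ω) (M N : RelStruct Ω I ar) : Prop :=
  ∀ (i : I) (t : Fin (ar i) → Ω), N.rel i (fun k => g (t k)) ↔ M.rel i t

def InductivelyFlexible {Ω I : Type} {ar : I → ℕ} (M : RelStruct Ω I ar) : Prop :=
  ∃ F : Set (Set (Ω × Ω)), FlexibleWitness {g | IsIso g M M} F

/-! There are at most `2^ℵ₀` isomorphism sets `Iso(M, M')`: each is closed in the pointwise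
topology, hence determined by the countably many finite partial maps it extends. Enumerate them in
order type `𝔠` and, by transfinite recursion, pick from the `i`-th one an isomorphism that keeps the
set chosen so far strongly independent. Strong independence has finite character, so it survives
limit stages and the whole transversal `T` is strongly independent.

Let `G = ⟨T⟩ · Fin(Ω)`, where the normal subgroup `Fin(Ω)` of finitary permutations is already
dense. A nontrivial element of `⟨T⟩` has finitely many fixed points, and multiplying by a finitary
permutation preserves this; so every element of `G` is finitary or has finitely many fixed points,
and a permutation with infinitely many fixed and infinitely many moved points is not in `G`. -/

section

open Cardinal Set

universe u

theorem Subgroup.exists_finset_of_mem_closure {G : Type*} [Group G] {s : Set G} {x : G}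
    (hx : x ∈ Subgroup.closure s) :
    ∃ t : Finset G, ↑t ⊆ s ∧ x ∈ Subgroup.closure (t : Set G) := by
  classical
  induction hx using Subgroup.closure_induction with
  | mem x hx => exact ⟨{x}, by simpa using hx, Subgroup.subset_closure (by simp)⟩
  | one => exact ⟨∅, by simp, one_mem _⟩
  | mul x y _ _ hx hy =>
    obtain ⟨t, hts, hxt⟩ := hx
    obtain ⟨u, hus, hyu⟩ := hy
    refine ⟨t ∪ u, by simpa using ⟨hts, hus⟩, mul_mem ?_ ?_⟩
    · exact Subgroup.closure_mono (by simp) hxt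
    · exact Subgroup.closure_mono (by simp) hyu
  | inv x _ hx =>
    obtain ⟨t, hts, hxt⟩ := hx
    exact ⟨t, hts, inv_mem hxt⟩

theorem exists_forall_eq_apply_image_Iio {ι α : Type*} [Preorder ι] [WellFoundedLT ι]
    (g : Set α → ι → α) : ∃ F : ι → α, ∀ i, F i = g (F '' Iio i) i := by
  refine ⟨wellFounded_lt.fix fun i F => g (range fun j : Iio i => F j j.2) i, fun i => ?_⟩
  rw [wellFounded_lt.fix_eq, image_eq_range]

def IsChainClosed {β : Type*} (P : Set β → Prop) : Prop :=
  ∀ 𝒞 : Set (Set β), IsChain (· ⊆ ·) 𝒞 → (∀ A ∈ 𝒞, P A) → P (⋃₀ 𝒞)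

namespace IsChainClosed

variable {β : Type u} {P : Set β → Prop}

theorem empty (hP : IsChainClosed P) : P ∅ := by
  simpa using hP ∅ IsChain.empty (by simp)

theorem range_of_insert {ι : Type*} [LinearOrder ι] [WellFoundedLT ι] (hP : IsChainClosed P)
    {F : ι → β} (hF : ∀ i, P (F '' Iio i) → P (insert (F i) (F '' Iio i))) : P (range F) := by
  have hchain : IsChain (· ⊆ ·) (range fun j => F '' Iic j) :=
    Monotone.isChain_range fun _ _ hjk => image_mono (Iic_subset_Iic.2 hjk)
  have hP_Iic : ∀ i, P (F '' Iic i) := by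
    intro i
    induction i using WellFoundedLT.induction with
    | ind i ih =>
      have hIio : F '' Iio i = ⋃₀ ((fun j => F '' Iic j) '' Iio i) := by
        ext x
        simp only [sUnion_image, mem_iUnion, mem_image, mem_Iio, mem_Iic, exists_prop]
        constructor
        · rintro ⟨j, hj, rfl⟩
          exact ⟨j, hj, j, le_rfl, rfl⟩
        · rintro ⟨j, hj, k, hkj, rfl⟩
          exact ⟨k, hkj.trans_lt hj, rfl⟩
      rw [← Iio_insert, image_insert_eq]
      refine hF i ?_
      rw [hIio]
      refine hP _ (hchain.mono (image_subset_range _ _)) ?_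
      rintro _ ⟨j, hj, rfl⟩
      exact ih j hj
  have hrange : range F = ⋃₀ range fun j => F '' Iic j := by
    ext x
    simp only [sUnion_range, mem_iUnion, mem_range, mem_image, mem_Iic]
    constructor
    · rintro ⟨j, rfl⟩
      exact ⟨j, j, le_rfl, rfl⟩
    · rintro ⟨-, k, -, rfl⟩
      exact ⟨k, rfl⟩
  rw [hrange]
  exact hP _ hchain (by rintro _ ⟨j, rfl⟩; exact hP_Iic j)

theorem exists_transversal (hP : IsChainClosed P) (κ : Cardinal.{u})
    {𝒮 : Set (Set β)} (h𝒮 : #𝒮 ≤ κ)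
    (hext : ∀ A, P A → #A < κ → ∀ S ∈ 𝒮, ∃ f ∈ S, P (insert f A)) :
    ∃ T, P T ∧ ∀ S ∈ 𝒮, (T ∩ S).Nonempty := by
  rcases 𝒮.eq_empty_or_nonempty with rfl | ⟨S₀, hS₀⟩
  · exact ⟨∅, hP.empty, by simp⟩
  have : Nonempty 𝒮 := ⟨⟨S₀, hS₀⟩⟩
  have hκ : #(∅ : Set β) < κ := by
    simpa using (pos_iff_ne_zero.2 (mk_ne_zero 𝒮)).trans_le h𝒮
  obtain ⟨emb⟩ : Nonempty (𝒮 ↪ κ.ord.ToType) := by rwa [← le_def, mk_ord_toType]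
  set e := Function.invFun emb
  have he : Function.Surjective e := Function.invFun_surjective emb.injective
  have hstep : ∀ A i, ∃ f ∈ (e i : Set β), P A → #A < κ → P (insert f A) := by
    intro A i
    by_cases hA : P A ∧ #A < κ
    · obtain ⟨f, hf, hfA⟩ := hext A hA.1 hA.2 _ (e i).2
      exact ⟨f, hf, fun _ _ => hfA⟩
    · obtain ⟨f, hf, -⟩ := hext ∅ hP.empty hκ _ (e i).2
      exact ⟨f, hf, fun h h' => absurd ⟨h, h'⟩ hA⟩
  choose g hg_mem hg_P using hstep
  -- the `i`-th stage meets `e i`, and there are fewer than `κ` earlier stages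
  obtain ⟨F, hF⟩ := exists_forall_eq_apply_image_Iio g
  refine ⟨range F, hP.range_of_insert fun i hi => ?_, fun S hS => ?_⟩
  · rw [hF i]
    exact hg_P _ i hi (mk_image_le.trans_lt (by simpa using mk_Iio_lt i))
  · obtain ⟨i, hi⟩ := he ⟨S, hS⟩
    have hFi := hg_mem (F '' Iio i) i
    rw [hi, ← hF i] at hFi
    exact ⟨F i, mem_range_self i, hFi⟩

end IsChainClosed

namespace StronglyIndependent

variable {Ω : Type} {𝒢 : Set (Equiv.Perm Ω)}

theorem isChainClosed : IsChainClosed (StronglyIndependent (Ω := Ω)) := by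
  intro 𝒞 hc h n w hw f hf hmem
  obtain ⟨𝒢, h𝒢, hf𝒢⟩ := hc.directedOn.exists_mem_subset_of_finite_of_subset_sUnion
    ⟨_, (mem_sUnion.1 (hmem 0)).choose_spec.1⟩ (finite_range f) (range_subset_iff.2 hmem)
  exact h 𝒢 h𝒢 n w hw f hf fun i => hf𝒢 (mem_range_self i)

theorem finite_fixedPoints_lift {ι : Type} [Finite ι] (h : StronglyIndependent 𝒢)
    {f : ι → Equiv.Perm Ω} (hf : Function.Injective f) (hmem : ∀ i, f i ∈ 𝒢)
    {w : FreeGroup ι} (hw : w ≠ 1) : {x | FreeGroup.lift f w x = x}.Finite := by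
  obtain ⟨n, ⟨e⟩⟩ := Finite.exists_equiv_fin ι
  cases n with
  | zero =>
    have : IsEmpty ι := e.isEmpty
    exact absurd (Subsingleton.elim w 1) hw
  | succ n =>
    have hlift :
        (FreeGroup.lift (f ∘ e.symm)).comp (FreeGroup.map e) = FreeGroup.lift f :=
      FreeGroup.ext_hom _ _ fun i => by simp
    rw [← hlift]
    exact h n _ ((map_ne_one_iff _ (FreeGroup.freeGroupCongr e).injective).2 hw) _
      (hf.comp e.symm.injective) fun i => hmem _

theorem finite_fixedPoints_of_mem_closure (h : StronglyIndependent 𝒢) {g : Equiv.Perm Ω}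
    (hg : g ∈ Subgroup.closure 𝒢) (hg1 : g ≠ 1) : {x | g x = x}.Finite := by
  obtain ⟨t, ht𝒢, hgt⟩ := Subgroup.exists_finset_of_mem_closure hg
  rw [FreeGroup.closure_eq_range] at hgt
  obtain ⟨w, rfl⟩ := hgt
  refine h.finite_fixedPoints_lift Subtype.val_injective (fun i => ht𝒢 i.2) ?_
  rintro rfl
  exact hg1 (map_one _)

end StronglyIndependent

section Finitary

variable (Ω : Type)

def finitaryPerms : Subgroup (Equiv.Perm Ω) where
  carrier := {g | {x | g x ≠ x}.Finite}
  one_mem' := by simp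
  mul_mem' {g h} hg hh := (hg.union hh).subset fun x hx => by
    by_contra! hgh
    simp_all [not_or]
  inv_mem' {g} hg := by
    have : {x | g⁻¹ x ≠ x} = {x | g x ≠ x} := by
      ext x
      exact not_congr (Equiv.Perm.inv_eq_iff_eq.trans eq_comm)
    show {x | g⁻¹ x ≠ x}.Finite
    rwa [this]

instance finitaryPerms_normal : (finitaryPerms Ω).Normal where
  conj_mem g hg h := (hg.image h).subset fun x hx =>
    ⟨h⁻¹ x, fun hfix => hx (by
      rw [Equiv.Perm.mul_apply, Equiv.Perm.mul_apply, hfix]; simp), by simp⟩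

variable {Ω}

theorem swap_mem_finitaryPerms [DecidableEq Ω] (a b : Ω) : Equiv.swap a b ∈ finitaryPerms Ω :=
  (Set.toFinite {a, b}).subset fun x hx => by
    by_contra! hab
    simp only [Set.mem_insert_iff, Set.mem_singleton_iff, not_or] at hab
    exact hx (Equiv.swap_apply_of_ne_of_ne hab.1 hab.2)

theorem exists_mem_finitaryPerms_eqOn (h : Equiv.Perm Ω) (S : Finset Ω) :
    ∃ g ∈ finitaryPerms Ω, ∀ a ∈ S, g a = h a := by
  classical
  induction S using Finset.induction_on with
  | empty => exact ⟨1, one_mem _, by simp⟩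
  | insert a S haS ih =>
    obtain ⟨g, hg, hgh⟩ := ih
    refine ⟨Equiv.swap (g a) (h a) * g, mul_mem (swap_mem_finitaryPerms _ _) hg, ?_⟩
    simp only [Finset.mem_insert, forall_eq_or_imp, Equiv.Perm.mul_apply, Equiv.swap_apply_left,
      true_and]
    intro x hx
    -- `g x = h x` differs from `g a` and `h a` because `x ≠ a`
    have hxa : x ≠ a := by rintro rfl; exact haS hx
    rw [hgh x hx, Equiv.swap_apply_of_ne_of_ne]
    · rw [← hgh x hx]; exact g.injective.ne hxa
    · exact h.injective.ne hxa

theorem finite_fixedPoints_mul_of_mem_finitaryPerms {w σ : Equiv.Perm Ω} (hw : {x | w x = x}.Finite)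
    (hσ : σ ∈ finitaryPerms Ω) : {x | (w * σ) x = x}.Finite :=
  (hw.union hσ).subset fun x hx => by
    by_cases hσx : σ x = x
    · left; simpa [hσx] using hx
    · exact Or.inr hσx

theorem exists_perm_infinite_fixedPoints_not_mem_finitaryPerms [Countable Ω] [Infinite Ω] :
    ∃ h : Equiv.Perm Ω, {x | h x = x}.Infinite ∧ h ∉ finitaryPerms Ω := by
  obtain ⟨e⟩ : Nonempty (Ω ≃ ℤ ⊕ ℕ) := Cardinal.eq.1 (by simp)
  refine ⟨e.symm.permCongr (Equiv.sumCongr (Equiv.addRight 1) 1), ?_, ?_⟩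
  · refine (Set.infinite_range_of_injective (e.symm.injective.comp Sum.inr_injective)).mono ?_
    rintro _ ⟨n, rfl⟩
    simp [Equiv.permCongr_apply]
  · refine Set.Infinite.mono ?_
      (Set.infinite_range_of_injective (e.symm.injective.comp Sum.inl_injective))
    rintro _ ⟨n, rfl⟩
    simp [Equiv.permCongr_apply]

end Finitary

theorem StronglyIndependent.mem_finitaryPerms_or_finite_fixedPoints {Ω : Type}
    {𝒢 : Set (Equiv.Perm Ω)} (h : StronglyIndependent 𝒢) {g : Equiv.Perm Ω}
    (hg : g ∈ Subgroup.closure 𝒢 ⊔ finitaryPerms Ω) :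
    g ∈ finitaryPerms Ω ∨ {x | g x = x}.Finite := by
  obtain ⟨w, hw, σ, hσ, rfl⟩ := Subgroup.mem_sup_of_normal_right.1 hg
  by_cases hw1 : w = 1
  · left; simpa [hw1] using hσ
  · exact Or.inr <| finite_fixedPoints_mul_of_mem_finitaryPerms
      (h.finite_fixedPoints_of_mem_closure hw hw1) hσ

section PointwiseClosed

variable {Ω : Type}

def IsPointwiseClosed (S : Set (Equiv.Perm Ω)) : Prop :=
  ∀ g : Equiv.Perm Ω, (∀ s : Finset Ω, ∃ h ∈ S, ∀ a ∈ s, h a = g a) → g ∈ S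

theorem isPointwiseClosed_setOf_isIso {I : Type} {ar : I → ℕ} (M N : RelStruct Ω I ar) :
    IsPointwiseClosed {g | IsIso g M N} := by
  classical
  intro g hg i t
  obtain ⟨h, hh, hhg⟩ := hg (Finset.univ.image t)
  have hgh : (fun k => g (t k)) = fun k => h (t k) := funext fun k => (hhg _ (by simp)).symm
  rw [hgh]
  exact hh i t

def finitePartialMaps (S : Set (Equiv.Perm Ω)) : Set (Finset (Ω × Ω)) :=
  {p | ∃ h ∈ S, ∀ q ∈ p, h q.1 = q.2}

theorem IsPointwiseClosed.mem_iff [DecidableEq Ω] {S : Set (Equiv.Perm Ω)}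
    (hS : IsPointwiseClosed S) {g : Equiv.Perm Ω} :
    g ∈ S ↔ ∀ s : Finset Ω, s.image (fun a => (a, g a)) ∈ finitePartialMaps S := by
  refine ⟨fun hg s => ⟨g, hg, by simp⟩, fun hg => hS g fun s => ?_⟩
  obtain ⟨h, hh, hhg⟩ := hg s
  exact ⟨h, hh, fun a ha => hhg _ (Finset.mem_image_of_mem _ ha)⟩

theorem injOn_finitePartialMaps :
    Set.InjOn (finitePartialMaps (Ω := Ω)) {S | IsPointwiseClosed S} := by
  classical
  intro S hS T hT hST
  ext g
  rw [IsPointwiseClosed.mem_iff hS, IsPointwiseClosed.mem_iff hT, hST]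

theorem mk_setOf_isPointwiseClosed_le [Countable Ω] :
    #{S : Set (Equiv.Perm Ω) | IsPointwiseClosed S} ≤ 𝔠 :=
  calc #{S : Set (Equiv.Perm Ω) | IsPointwiseClosed S}
      ≤ #(Set (Finset (Ω × Ω))) := mk_le_of_injective injOn_finitePartialMaps.injective
    _ = 2 ^ #(Finset (Ω × Ω)) := mk_set
    _ ≤ 2 ^ ℵ₀ := power_le_power_left two_ne_zero mk_le_aleph0
    _ = 𝔠 := two_power_aleph0

end PointwiseClosed

def flexibleIsoSets (Ω : Type) : Set (Set (Equiv.Perm Ω)) :=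
  {S | ∃ (I : Type) (ar : I → ℕ) (M M' : RelStruct Ω I ar), InductivelyFlexible M ∧
    InductivelyFlexible M' ∧ (∃ g, IsIso g M M') ∧ S = {g | IsIso g M M'}}

theorem mk_flexibleIsoSets_le (Ω : Type) [Countable Ω] : #(flexibleIsoSets Ω) ≤ 𝔠 := by
  refine le_trans (mk_le_mk_of_subset ?_) mk_setOf_isPointwiseClosed_le
  rintro _ ⟨I, ar, M, M', -, -, -, rfl⟩
  exact isPointwiseClosed_setOf_isIso M M'

end

/-- If for every strongly independent `𝒢 ⊆ Sym(Ω)` of size `< 2^ℵ₀` and every pair of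
isomorphic inductively flexible structures with universe `Ω` there is an isomorphism `f`
with `𝒢 ∪ {f}` strongly independent, then there is a proper dense subgroup `G ≤ Sym(Ω)`
containing an isomorphism between any pair of isomorphic inductively flexible structures. -/
theorem stmt_11 (Ω : Type) [Countable Ω] [Infinite Ω]
    (H : ∀ (I : Type) (ar : I → ℕ) (𝒢 : Set (Equiv.Perm Ω)), StronglyIndependent 𝒢 →
      Cardinal.mk ↥𝒢 < Cardinal.continuum →
      ∀ M₁ M₂ : RelStruct Ω I ar, InductivelyFlexible M₁ → InductivelyFlexible M₂ →
        (∃ g : Equiv.Perm Ω, IsIso g M₁ M₂) →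
        ∃ f : Equiv.Perm Ω, IsIso f M₁ M₂ ∧ StronglyIndependent (insert f 𝒢)) :
    ∃ G : Subgroup (Equiv.Perm Ω), G ≠ ⊤ ∧
      (∀ h : Equiv.Perm Ω, ∀ S : Finset Ω, ∃ g ∈ G, ∀ a ∈ S, g a = h a) ∧
      ∀ (I : Type) (ar : I → ℕ) (M M' : RelStruct Ω I ar),
        InductivelyFlexible M → InductivelyFlexible M' →
        (∃ g : Equiv.Perm Ω, IsIso g M M') → ∃ f ∈ G, IsIso f M M' := by
  obtain ⟨T, hT, hTmeets⟩ := StronglyIndependent.isChainClosed.exists_transversal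
    Cardinal.continuum (mk_flexibleIsoSets_le Ω)
    fun A hA hAc S ⟨I, ar, M, M', hM, hM', hiso, hS⟩ => hS ▸ H I ar A hA hAc M M' hM hM' hiso
  refine ⟨Subgroup.closure T ⊔ finitaryPerms Ω, fun htop => ?_, fun h S => ?_, ?_⟩
  · obtain ⟨h, hfix, hfin⟩ := exists_perm_infinite_fixedPoints_not_mem_finitaryPerms (Ω := Ω)
    exact (hT.mem_finitaryPerms_or_finite_fixedPoints (htop ▸ Subgroup.mem_top h)).elim hfin hfix
  · obtain ⟨g, hg, hgh⟩ := exists_mem_finitaryPerms_eqOn h S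
    exact ⟨g, Subgroup.mem_sup_right hg, hgh⟩
  · intro I ar M M' hM hM' hiso
    obtain ⟨f, hfT, hf⟩ := hTmeets _ ⟨I, ar, M, M', hM, hM', hiso, rfl⟩
    exact ⟨f, Subgroup.mem_sup_left (Subgroup.subset_closure hfT), hf⟩
end

section
/- Let Ω be countably infinite, let W(x₀,…,x_n) be a reduced word using x₀ with block decomposition W ≡ V_{L'(W)-1}⋯V₀, let f₁,…,f_n ∈ Sym(Ω), and let u be a finite partial bijection on Ω. Then the number of fixed points of W(ū, f₁,…,f_n), for any ū ∈ Sym(Ω) extending u with the property that every non-injective itinerary of W with respect to (ū, f₁,…,f_n) 'collapses' already at the level of u, is bounded by |{i : V_i ≡ x₀^{±1}}|·|dom(u)| + Σ_{i : V_i ≢ x₀^{±1}} |fix(V_i(f₁,…,f_n))|. -/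
/-- The word `w` uses the letter `x₀`. -/
def Uses0 {n : ℕ} (w : FreeGroup (Fin (n + 1))) : Prop :=
  ∃ b : Bool, ((0 : Fin (n + 1)), b) ∈ FreeGroup.toWord w

/-- `r` is (the graph relation of) a partial bijection on `Ω`. -/
def IsPBijRel {Ω : Type} (r : Ω → Ω → Prop) : Prop :=
  (∀ a b b', r a b → r a b' → b = b') ∧ (∀ a a' b, r a b → r a' b → a = a')

/-- The relation obtained by applying a single letter (a generator or its inverse)
interpreted by the partial bijections `f`. -/
def evalLetter {Ω ι : Type} (f : ι → Ω → Ω → Prop) : ι × Bool → Ω → Ω → Prop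
  | (i, true) => f i
  | (i, false) => fun a b => f i b a

/-- The relation "the word `w`, evaluated at the partial bijections `f`, maps `a` to `b`":
the letters of `w` are applied in succession, rightmost first. -/
def evalWord {Ω ι : Type} [DecidableEq ι] (f : ι → Ω → Ω → Prop) (w : FreeGroup ι) :
    Ω → Ω → Prop :=
  (FreeGroup.toWord w).foldr
    (fun l rest => fun a b => ∃ m, rest a m ∧ evalLetter f l m b) (fun a b => a = b)

/-- An itinerary with respect to the sequence of partial bijections `V (L-1), …, V 0`
(the evaluated blocks of a word): a tuple `t_L, …, t_0` of elements of `Ω ⊔ {c}` (with `c`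
rendered as `none`), not all `c`, moved forwards and backwards through the blocks as far as
defined, with `c` propagating outward once movement becomes undefined. -/
def IsItinerary {Ω : Type} {L : ℕ} (V : Fin L → Ω → Ω → Prop)
    (t : Fin (L + 1) → Option Ω) : Prop :=
  (∃ i, (t i).isSome) ∧
  (∀ i : Fin L, ∀ a : Ω, t i.castSucc = some a →
      ((∀ b, V i a b → t i.succ = some b) ∧ ((¬ ∃ b, V i a b) → t i.succ = none))) ∧
  (∀ i : Fin L, ∀ b : Ω, t i.succ = some b →
      ((∀ a, V i a b → t i.castSucc = some a) ∧ ((¬ ∃ a, V i a b) → t i.castSucc = none))) ∧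
  (∀ i j k : Fin (L + 1), i < j → j ≤ k → (t i).isSome → t j = none → t k = none) ∧
  (∀ i j k : Fin (L + 1), k ≤ j → j < i → (t i).isSome → t j = none → t k = none)

/-!
A fixed point `x` of `W(ū, f)` yields the non-injective itinerary `x, B₀ x, B₁ B₀ x, …, W x = x`.
By hypothesis it collapses at the level of `u`: some `u`-itinerary `t` agrees with it at an index
`i₀` and repeats itself at a later index `j₀`. As `u ⊆ ū`, the itinerary `t` follows the orbit of
`x` from `i₀` to `j₀`. Either one of the blocks crossed is `x₀^{±1}`, and then it is crossed along
an edge of `u`, so one point of the orbit of `x` lies in `dom u`; or, by maximality of the blocks,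
`j₀ = i₀ + 1` and the orbit point at `i₀` is a fixed point of the single block `B i₀`. Either way
`x` is recovered from a block index `i` and a point of `dom u` or of `fix(Bᵢ(ū, f))`.
-/

open FreeGroup

section EvalWord

variable {Ω ι : Type}

theorem foldr_evalLetter_graph (g : ι → Equiv.Perm Ω) (l : List (ι × Bool)) (a b : Ω) :
    l.foldr (fun l rest => fun a b => ∃ m, rest a m ∧
        evalLetter (fun i a b => g i a = b) l m b) (fun a b => a = b) a b ↔
      (l.map fun x => cond x.2 (g x.1) (g x.1)⁻¹).prod a = b := by
  induction l generalizing b with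
  | nil => simp
  | cons hd tl ih =>
    simp only [List.foldr_cons, ih]
    obtain ⟨i, _ | _⟩ := hd <;>
      simp [evalLetter, Equiv.Perm.mul_apply, Equiv.eq_symm_apply, eq_comm]

theorem foldr_evalLetter_mono (V V' : ι → Ω → Ω → Prop) (h : ∀ i a b, V i a b → V' i a b)
    (l : List (ι × Bool)) (a b : Ω) :
    l.foldr (fun l rest => fun a b => ∃ m, rest a m ∧ evalLetter V l m b)
        (fun a b => a = b) a b →
      l.foldr (fun l rest => fun a b => ∃ m, rest a m ∧ evalLetter V' l m b)
        (fun a b => a = b) a b := by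
  induction l generalizing b with
  | nil => exact id
  | cons hd tl ih =>
    obtain ⟨i, _ | _⟩ := hd <;>
      exact fun ⟨m, h₁, h₂⟩ => ⟨m, ih m h₁, h _ _ _ h₂⟩

variable [DecidableEq ι]

theorem evalWord_graph (g : ι → Equiv.Perm Ω) (w : FreeGroup ι) :
    evalWord (fun i a b => g i a = b) w = fun a b => lift g w a = b := by
  funext a b
  rw [evalWord, propext (foldr_evalLetter_graph g _ a b)]
  conv_rhs => rw [← mk_toWord (x := w), lift_mk]

theorem evalWord_mono (V V' : ι → Ω → Ω → Prop) (h : ∀ i a b, V i a b → V' i a b)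
    (w : FreeGroup ι) (a b : Ω) : evalWord V w a b → evalWord V' w a b :=
  foldr_evalLetter_mono V V' h _ a b

theorem evalWord_of (V : ι → Ω → Ω → Prop) (i : ι) (a b : Ω) :
    evalWord V (of i) a b ↔ V i a b := by
  simp [evalWord, toWord_of, evalLetter]

theorem evalWord_of_inv (V : ι → Ω → Ω → Prop) (i : ι) (a b : Ω) :
    evalWord V (of i)⁻¹ a b ↔ V i b a := by
  simp [evalWord, toWord_inv, toWord_of, invRev, evalLetter]

end EvalWord

section Interpretation

variable {Ω : Type} {n : ℕ} (σ : Equiv.Perm Ω) (f : Fin n → Equiv.Perm Ω)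

theorem cons_graph_eq :
    (Fin.cons (fun a b => σ a = b) (fun i a b => f i a = b) : Fin (n + 1) → Ω → Ω → Prop) =
      fun j a b => (Fin.cons σ f : Fin (n + 1) → Equiv.Perm Ω) j a = b := by
  funext j
  cases j using Fin.cases <;> rfl

theorem cons_rel_le_cons_graph {R : Ω → Ω → Prop} (hR : ∀ a b, R a b → σ a = b)
    (j : Fin (n + 1)) (a b : Ω)
    (h : (Fin.cons R (fun i a b => f i a = b) : Fin (n + 1) → Ω → Ω → Prop) j a b) :
    (Fin.cons σ f : Fin (n + 1) → Equiv.Perm Ω) j a = b := by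
  cases j using Fin.cases
  exacts [hR a b h, h]

end Interpretation

section Itinerary

variable {Ω : Type} {L : ℕ}

theorem isItinerary_some_of_perm (σ : Fin L → Equiv.Perm Ω) (p : ℕ → Ω)
    (hp : ∀ i : Fin L, p (i + 1) = σ i (p i)) :
    IsItinerary (fun i a b => σ i a = b) (fun i => some (p i)) := by
  refine ⟨⟨0, rfl⟩, fun i a ha => ⟨fun b hb => ?_, fun hne => (hne ⟨_, rfl⟩).elim⟩,
    fun i b hb => ⟨fun a hab => ?_, fun hne => (hne ⟨(σ i).symm b, by simp⟩).elim⟩,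
    fun _ _ _ _ _ _ h => (Option.some_ne_none _ h).elim,
    fun _ _ _ _ _ _ h => (Option.some_ne_none _ h).elim⟩
  · simp only [Fin.val_castSucc, Option.some.injEq] at ha
    simp [hp, ha, hb]
  · simp only [Fin.val_succ, Option.some.injEq, hp] at hb
    simp [(σ i).injective (hab.trans hb.symm)]

variable {V : Fin L → Ω → Ω → Prop} {t : Fin (L + 1) → Option Ω} {p : ℕ → Ω}

theorem IsItinerary.step (ht : IsItinerary V t)
    (hp : ∀ (i : Fin L) b, V i (p i) b → b = p (i + 1)) (K : Fin L)
    (hK : t K.castSucc = some (p K)) {j : Fin (L + 1)} (hj : K.succ ≤ j) (hsome : (t j).isSome) :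
    t K.succ = some (p (K + 1)) ∧ V K (p K) (p (K + 1)) := by
  obtain ⟨-, fwd, -, propF, -⟩ := ht
  by_cases h : ∃ b, V K (p K) b
  · obtain ⟨b, hb⟩ := h
    obtain rfl := hp K b hb
    exact ⟨(fwd K _ hK).1 _ hb, hb⟩
  · have := propF K.castSucc K.succ j K.castSucc_lt_succ hj (by simp [hK]) ((fwd K _ hK).2 h)
    simp [this] at hsome

theorem IsItinerary.eq_some_of_le (ht : IsItinerary V t)
    (hp : ∀ (i : Fin L) b, V i (p i) b → b = p (i + 1)) {i₀ j₀ : Fin (L + 1)}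
    (h₀ : t i₀ = some (p i₀)) (hsome : (t j₀).isSome) {m : Fin (L + 1)} (h₁ : i₀ ≤ m)
    (h₂ : m ≤ j₀) : t m = some (p m) := by
  obtain ⟨m, hm⟩ := m
  change (i₀ : ℕ) ≤ m at h₁
  induction m, h₁ using Nat.le_induction with
  | base => exact h₀
  | succ m hm' ih =>
    exact (ht.step hp ⟨m, by omega⟩ (ih (by omega) (Nat.le_of_succ_le h₂)) h₂ hsome).1

theorem IsItinerary.rel_of_le (ht : IsItinerary V t)
    (hp : ∀ (i : Fin L) b, V i (p i) b → b = p (i + 1)) {i₀ j₀ : Fin (L + 1)}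
    (h₀ : t i₀ = some (p i₀)) (hsome : (t j₀).isSome) (K : Fin L) (h₁ : (i₀ : ℕ) ≤ K)
    (h₂ : (K : ℕ) + 1 ≤ j₀) : V K (p K) (p (K + 1)) :=
  (ht.step hp K (ht.eq_some_of_le hp h₀ hsome h₁ (Nat.le_of_succ_le h₂)) h₂ hsome).2

end Itinerary

section Blocks

variable {n L : ℕ}

def IsX0Block (w : FreeGroup (Fin (n + 1))) : Prop :=
  w = of 0 ∨ w = (of 0)⁻¹

/-- The itinerary entry from which an edge of `u` leaves when crossing the `x₀`-block `B k`. -/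
def x0Source (B : Fin L → FreeGroup (Fin (n + 1))) (k : Fin L) : ℕ :=
  if B k = (of 0)⁻¹ then k + 1 else k

theorem not_uses0_one : ¬ Uses0 (1 : FreeGroup (Fin (n + 1))) := by
  simp [Uses0]

theorem of_ne_inv_of {α : Type*} [DecidableEq α] (i : α) : of i ≠ (of i)⁻¹ := by
  intro h
  simpa [invRev] using congrArg toWord h

theorem eq_succ_of_forall_not_isX0Block {B : Fin L → FreeGroup (Fin (n + 1))}
    (hblocks : ∀ i, IsX0Block (B i) ∨ ¬ Uses0 (B i))
    (hmax : ∀ i j : Fin L, (j : ℕ) = (i : ℕ) + 1 → ¬(¬ Uses0 (B i) ∧ ¬ Uses0 (B j)))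
    {i j : ℕ} (hij : i < j) (hj : j ≤ L)
    (h : ∀ K : Fin L, i ≤ K → (K : ℕ) + 1 ≤ j → ¬ IsX0Block (B K)) : j = i + 1 := by
  by_contra hne
  have free (K : Fin L) (h₁ : i ≤ K) (h₂ : (K : ℕ) + 1 ≤ j) : ¬ Uses0 (B K) :=
    (hblocks K).resolve_left (h K h₁ h₂)
  exact hmax ⟨i, by omega⟩ ⟨i + 1, by omega⟩ rfl
    ⟨free _ le_rfl hij, free _ (Nat.le_succ i) (by simp only; omega)⟩

theorem exists_block_witness {Ω : Type} {B : Fin L → FreeGroup (Fin (n + 1))}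
    (hblocks : ∀ i, IsX0Block (B i) ∨ ¬ Uses0 (B i))
    (hmax : ∀ i j : Fin L, (j : ℕ) = (i : ℕ) + 1 → ¬(¬ Uses0 (B i) ∧ ¬ Uses0 (B j)))
    {g : Fin (n + 1) → Equiv.Perm Ω} {F : Fin (n + 1) → Ω → Ω → Prop}
    (hF : ∀ j a b, F j a b → g j a = b) {p : ℕ → Ω}
    (hp : ∀ i : Fin L, p (i + 1) = lift g (B i) (p i)) {t : Fin (L + 1) → Option Ω}
    (ht : IsItinerary (fun i => evalWord F (B i)) t) {i₀ j₀ : Fin (L + 1)} (hij : i₀ < j₀)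
    (h₀ : t i₀ = some (p i₀)) (hj₀ : t j₀ = t i₀) :
    ∃ k : Fin L, (IsX0Block (B k) ∧ ∃ b, F 0 (p (x0Source B k)) b) ∨
      (¬ IsX0Block (B k) ∧ lift g (B k) (p (x0Source B k)) = p (x0Source B k)) := by
  have hV (i : Fin L) (b : Ω) (h : evalWord F (B i) (p i) b) : b = p (i + 1) := by
    have := evalWord_mono F _ hF _ _ _ h
    rw [evalWord_graph] at this
    rw [hp, this]
  have hsome : (t j₀).isSome := by simp [hj₀, h₀]
  by_cases hx : ∃ K : Fin L, (i₀ : ℕ) ≤ K ∧ (K : ℕ) + 1 ≤ j₀ ∧ IsX0Block (B K)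
  · obtain ⟨K, h₁, h₂, hK⟩ := hx
    refine ⟨K, Or.inl ⟨hK, ?_⟩⟩
    have hrel := ht.rel_of_le hV h₀ hsome K h₁ h₂
    rcases hK with hK | hK
    · rw [hK, evalWord_of] at hrel
      rw [x0Source, if_neg (hK ▸ of_ne_inv_of 0)]
      exact ⟨_, hrel⟩
    · rw [hK, evalWord_of_inv] at hrel
      rw [x0Source, if_pos hK]
      exact ⟨_, hrel⟩
  · push Not at hx
    have hj := eq_succ_of_forall_not_isX0Block hblocks hmax hij j₀.is_le hx
    let k : Fin L := ⟨i₀, by omega⟩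
    have hk : ¬ IsX0Block (B k) := hx k le_rfl hj.ge
    refine ⟨k, Or.inr ⟨hk, ?_⟩⟩
    have hrep : p i₀ = p j₀ := Option.some.inj <| by
      rw [← h₀, ← hj₀, ht.eq_some_of_le hV h₀ hsome hij.le le_rfl]
    rw [x0Source, if_neg fun h => hk (Or.inr h), ← hp k]
    exact hj ▸ hrep.symm

end Blocks

section PrefixProd

def prefixProd {G : Type*} [Monoid G] {L : ℕ} (B : Fin L → G) (m : ℕ) : G :=
  ((List.ofFn B).take m).reverse.prod

variable {G : Type*} [Monoid G] {L : ℕ} (B : Fin L → G)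

theorem prefixProd_zero : prefixProd B 0 = 1 := by
  simp [prefixProd]

theorem prefixProd_succ (i : Fin L) : prefixProd B (i + 1) = B i * prefixProd B i := by
  simp [prefixProd, List.take_add_one]

theorem prefixProd_self : prefixProd B L = (List.ofFn B).reverse.prod := by
  rw [prefixProd, List.take_of_length_le (by simp)]

end PrefixProd

section Counting

theorem encard_le_sum_of_forall_exists_perm_mem {Ω ι : Type*} [Fintype ι] {S : Set Ω}
    (σ : ι → Equiv.Perm Ω) (s : ι → Set Ω) (h : ∀ x ∈ S, ∃ k, σ k x ∈ s k) :
    S.encard ≤ ∑ k, (s k).encard :=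
  calc S.encard ≤ (⋃ k, σ k ⁻¹' s k).encard :=
        Set.encard_le_encard fun x hx => Set.mem_iUnion.2 (h x hx)
    _ ≤ ∑ k, (σ k ⁻¹' s k).encard := Set.encard_iUnion_le_of_fintype _
    _ = ∑ k, (s k).encard := by simp only [Set.encard_preimage_of_bijective (σ _).bijective]

theorem sum_ite_eq_encard_mul_add {ι : Type*} [Fintype ι] (P : ι → Prop) [DecidablePred P]
    (a : ℕ∞) (F : ι → ℕ∞) :
    ∑ k, (if P k then a else F k) = {k | P k}.encard * a + ∑ k, if P k then 0 else F k := by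
  simp [Finset.sum_ite, nsmul_eq_mul, ← Set.encard_coe_eq_coe_finsetCard]

end Counting

open scoped Classical in
theorem stmt_15_general (Ω : Type) (n L : ℕ)
    (W : FreeGroup (Fin (n + 1))) (hW : Uses0 W)
    (B : Fin L → FreeGroup (Fin (n + 1)))
    (hdecomp : W = (List.ofFn B).reverse.prod)
    (hblocks : ∀ i, B i = FreeGroup.of 0 ∨ B i = (FreeGroup.of 0)⁻¹ ∨
      (B i ≠ 1 ∧ ¬ Uses0 (B i)))
    (hmax : ∀ i j : Fin L, (j : ℕ) = (i : ℕ) + 1 → ¬(¬ Uses0 (B i) ∧ ¬ Uses0 (B j)))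
    (f : Fin n → Equiv.Perm Ω)
    (u : Set (Ω × Ω))
    (ub : Equiv.Perm Ω) (hub : ∀ p ∈ u, ub p.1 = p.2)
    (hcollapse : ∀ t' : Fin (L + 1) → Option Ω,
      IsItinerary (fun i =>
        evalWord (Fin.cons (fun a b => ub a = b) (fun i a b => f i a = b)) (B i)) t' →
      (∃ i j : Fin (L + 1), i < j ∧ ∃ a : Ω, t' i = some a ∧ t' j = some a) →
      ∃ t : Fin (L + 1) → Option Ω,
        IsItinerary (fun i =>
          evalWord (Fin.cons (fun a b => (a, b) ∈ u) (fun i a b => f i a = b)) (B i)) t ∧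
        ∃ i₀ j₀ : Fin (L + 1), i₀ < j₀ ∧ (∃ a : Ω, t i₀ = some a ∧ t j₀ = some a) ∧
          t i₀ = t' i₀) :
    {x : Ω | FreeGroup.lift (Fin.cons ub f) W x = x}.encard ≤
      {i : Fin L | B i = FreeGroup.of 0 ∨ B i = (FreeGroup.of 0)⁻¹}.encard *
          (Prod.fst '' u).encard +
        ∑ i : Fin L, if B i = FreeGroup.of 0 ∨ B i = (FreeGroup.of 0)⁻¹ then 0
          else {x : Ω | FreeGroup.lift (Fin.cons ub f) (B i) x = x}.encard := by
  set g : Fin (n + 1) → Equiv.Perm Ω := Fin.cons ub f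
  have hL : 0 < L := Nat.pos_of_ne_zero fun h => by
    subst h
    exact not_uses0_one (by simpa [hdecomp] using hW)
  have key (x : Ω) (hx : lift g W x = x) : ∃ k, lift g (prefixProd B (x0Source B k)) x ∈
      if IsX0Block (B k) then Prod.fst '' u else {y | lift g (B k) y = y} := by
    let p : ℕ → Ω := fun m => lift g (prefixProd B m) x
    have hp (i : Fin L) : p (i + 1) = lift g (B i) (p i) := by
      simp [p, prefixProd_succ, Equiv.Perm.mul_apply]
    have hit := isItinerary_some_of_perm (fun i => lift g (B i)) p hp
    obtain ⟨t, ht, i₀, j₀, hij, ⟨a, ha, ha'⟩, h₀⟩ :=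
      hcollapse _ (by simpa only [cons_graph_eq, evalWord_graph] using hit)
      ⟨0, Fin.last L, by simpa [Fin.lt_def] using hL, x,
        by simp [p, prefixProd_zero], by simp [p, prefixProd_self, ← hdecomp, hx]⟩
    obtain ⟨k, hk | hk⟩ := exists_block_witness
      (fun i => (or_assoc.2 (hblocks i)).imp_right And.right) hmax
      (cons_rel_le_cons_graph ub f fun a b h => hub (a, b) h) hp ht hij h₀ (ha'.trans ha.symm)
    exacts [⟨k, by simpa [hk.1] using hk.2⟩, ⟨k, by simpa [hk.1] using hk.2⟩]
  calc _ ≤ ∑ k, (if IsX0Block (B k) then Prod.fst '' u else {y | lift g (B k) y = y}).encard :=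
        encard_le_sum_of_forall_exists_perm_mem _ _ key
    _ = _ := by
      simp only [apply_ite Set.encard]
      convert sum_ite_eq_encard_mul_add (fun k => IsX0Block (B k)) _ _ <;> rfl

open scoped Classical in
/-- Fixed-point bound: if `W` is a reduced word using `x₀` with block decomposition
`W ≡ B (L-1) ⋯ B 0`, `f₁, …, fₙ` are permutations, `u` is a finite partial bijection, and
`ū` is a permutation extending `u` such that every non-injective itinerary of `W` with respect
to `(ū, f₁, …, fₙ)` already collapses at the level of `u`, then the number of fixed points of
`W(ū, f₁, …, fₙ)` is at most
`|{i : Bᵢ ≡ x₀^{±1}}| ⋅ |dom u| + Σ_{i : Bᵢ ≢ x₀^{±1}} |fix(Bᵢ(f₁,…,fₙ))|`. -/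
theorem stmt_15 (Ω : Type) [Countable Ω] [Infinite Ω] (n L : ℕ)
    (W : FreeGroup (Fin (n + 1))) (hW : Uses0 W)
    (B : Fin L → FreeGroup (Fin (n + 1)))
    (hdecomp : W = (List.ofFn B).reverse.prod)
    (hblocks : ∀ i, B i = FreeGroup.of 0 ∨ B i = (FreeGroup.of 0)⁻¹ ∨
      (B i ≠ 1 ∧ ¬ Uses0 (B i)))
    (hmax : ∀ i j : Fin L, (j : ℕ) = (i : ℕ) + 1 → ¬(¬ Uses0 (B i) ∧ ¬ Uses0 (B j)))
    (f : Fin n → Equiv.Perm Ω)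
    (u : Set (Ω × Ω)) (hufin : u.Finite) (hu : IsPartialBijGraph u)
    (ub : Equiv.Perm Ω) (hub : ∀ p ∈ u, ub p.1 = p.2)
    (hcollapse : ∀ t' : Fin (L + 1) → Option Ω,
      IsItinerary (fun i =>
        evalWord (Fin.cons (fun a b => ub a = b) (fun i a b => f i a = b)) (B i)) t' →
      (∃ i j : Fin (L + 1), i < j ∧ ∃ a : Ω, t' i = some a ∧ t' j = some a) →
      ∃ t : Fin (L + 1) → Option Ω,
        IsItinerary (fun i =>
          evalWord (Fin.cons (fun a b => (a, b) ∈ u) (fun i a b => f i a = b)) (B i)) t ∧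
        ∃ i₀ j₀ : Fin (L + 1), i₀ < j₀ ∧ (∃ a : Ω, t i₀ = some a ∧ t j₀ = some a) ∧
          t i₀ = t' i₀) :
    {x : Ω | FreeGroup.lift (Fin.cons ub f) W x = x}.encard ≤
      {i : Fin L | B i = FreeGroup.of 0 ∨ B i = (FreeGroup.of 0)⁻¹}.encard *
          (Prod.fst '' u).encard +
        ∑ i : Fin L, if B i = FreeGroup.of 0 ∨ B i = (FreeGroup.of 0)⁻¹ then 0
          else {x : Ω | FreeGroup.lift (Fin.cons ub f) (B i) x = x}.encard :=
  stmt_15_general Ω n L W hW B hdecomp hblocks hmax f u ub hub hcollapse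
end

section
/- Assume MA(σ-centered). Then there exists a proper dense subgroup G < Sym(Ω), for Ω countably infinite, which acts transitively (and is transitive on Ω itself) on the set of all linear orders on Ω of order type ℚ, under the action of Sym(Ω) on orders by transport of structure. -/
/-!
Enumerate in order type `𝔠` all tasks `(e₁, e₂, S)`, where `e₁ e₂ : Ω ≃ ℚ` and `S` is finite, and
let `G` be generated by permutations `g_t` chosen by transfinite recursion, `g_t` being an
isomorphism from the order pulled back along `e₁` to the one pulled back along `e₂` that agrees
with `e₂⁻¹ ∘ e₁` on `S`. By Cantor's theorem these tasks make `G` transitive on orders of type `ℚ`,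
and with `e₂ = e₀ ∘ h⁻¹` they make it dense. To keep `G` proper, fix a fixed-point-free `f₀` and
keep the invariant that every finite subset of the group built so far disagrees with `f₀` at
infinitely many common points.

At a stage where the group `H` built so far has size `< 𝔠`, `g_t` is the union of a filter, given by
MA(σ-centered), on the countable poset of finite partial isomorphisms. Besides the sets forcing
totality, the filter meets, for each finite set `W` of words in `H ∪ {g}` and finite `F ⊆ Ω`, the
set of conditions under which all words of `W` move some `a ∉ F` off `f₀ a`; these are fewer than
`𝔠` sets. Such a condition is found by starting at an `a` where all short products of letters of
`W` from `H` avoid `f₀ a` and the finitely many points already used (the invariant for `H`), and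
evaluating the words letter by letter, defining `g` on each new point at a value outside a finite
bad set, so that no evaluation can return to a used point or end at `f₀ a`.
-/

def Centered {P : Type} [Preorder P] (Q : Set P) : Prop :=
  ∀ S : Finset P, ↑S ⊆ Q → ∃ p : P, ∀ q ∈ S, q ≤ p

def SigmaCentered (P : Type) [Preorder P] : Prop :=
  ∃ C : ℕ → Set P, (∀ n, Centered (C n)) ∧ (⋃ n, C n) = Set.univ

/-- Martin's Axiom for σ-centered partial orders: for any nonempty σ-centered partial order
and any family of fewer than continuum many open dense subsets, there is a filter meeting
every member of the family. -/
def MASigmaCentered : Prop :=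
  ∀ (P : Type) [Preorder P], Nonempty P → SigmaCentered P →
    ∀ 𝒟 : Set (Set P),
      (∀ D ∈ 𝒟, (∀ p ∈ D, ∀ q, p ≤ q → q ∈ D) ∧ (∀ p, ∃ q ∈ D, p ≤ q)) →
      Cardinal.mk ↥𝒟 < Cardinal.continuum →
      ∃ Q : Set P, Q.Nonempty ∧
        (∀ q₀ ∈ Q, ∀ q₁ ∈ Q, ∃ q ∈ Q, q₀ ≤ q ∧ q₁ ≤ q) ∧
        (∀ p q : P, p ≤ q → q ∈ Q → p ∈ Q) ∧
        ∀ D ∈ 𝒟, (Q ∩ D).Nonempty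

/-- `r` is a linear order on `Ω` of order type `ℚ`: a dense strict total order
without endpoints. -/
def QOrder {Ω : Type} (r : Ω → Ω → Prop) : Prop :=
  IsStrictTotalOrder Ω r ∧ (∀ a b, r a b → ∃ c, r a c ∧ r c b) ∧
    (∀ a, ∃ b, r a b) ∧ (∀ a, ∃ b, r b a)

open Cardinal Set Function Pointwise Equiv

universe u

theorem QOrder.exists_equiv_rat {Ω : Type} [Countable Ω] [Nonempty Ω] {r : Ω → Ω → Prop}
    (h : QOrder r) : ∃ e : Ω ≃ ℚ, ∀ a b, r a b ↔ e a < e b := by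
  obtain ⟨hsto, hdense, hmax, hmin⟩ := h
  classical
  let := linearOrderOfSTO r
  have : DenselyOrdered Ω := ⟨hdense⟩
  have : NoMaxOrder Ω := ⟨hmax⟩
  have : NoMinOrder Ω := ⟨hmin⟩
  obtain ⟨e⟩ := Order.iso_of_countable_dense Ω ℚ
  exact ⟨e.toEquiv, fun a b => e.lt_iff_lt.symm⟩

theorem sigmaCentered_of_countable (P : Type) [Preorder P] [Countable P] [Nonempty P] :
    SigmaCentered P := by
  obtain ⟨f, hf⟩ := exists_surjective_nat P
  refine ⟨fun n => {f n}, fun n S hS => ⟨f n, fun q hq => (hS hq).le⟩, ?_⟩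
  rw [iUnion_singleton_eq_range, hf.range_eq]

theorem MASigmaCentered.exists_directedOn (hMA : MASigmaCentered) {P : Type} [Preorder P]
    [Nonempty P] (hP : SigmaCentered P) {J : Type} (D : J → Set P) (hJ : #J < 𝔠)
    (hD : ∀ j p, ∃ q ∈ D j, p ≤ q) :
    ∃ Q : Set P, DirectedOn (· ≤ ·) Q ∧ ∀ j, (Q ∩ D j).Nonempty := by
  -- MA asks for upward closed sets; a downward closed filter meeting the upward closure of
  -- `D j` meets `D j` itself.
  let U : J → Set P := fun j => {q | ∃ p ∈ D j, p ≤ q}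
  obtain ⟨Q, -, hdir, hdown, hmeet⟩ := hMA P ‹_› hP (range U)
    (by
      rintro _ ⟨j, rfl⟩
      refine ⟨fun q ⟨p, hp, hpq⟩ q' hqq' => ⟨p, hp, hpq.trans hqq'⟩, fun p => ?_⟩
      obtain ⟨q, hq, hpq⟩ := hD j p
      exact ⟨q, ⟨q, hq, le_rfl⟩, hpq⟩)
    (mk_range_le.trans_lt hJ)
  refine ⟨Q, hdir, fun j => ?_⟩
  obtain ⟨q, hqQ, p, hp, hpq⟩ := hmeet (U j) ⟨j, rfl⟩
  exact ⟨p, hdown p q hpq hqQ, hp⟩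

def AllFinsets {α : Type*} (R : Finset α → Prop) (S : Set α) : Prop :=
  ∀ T : Finset α, ↑T ⊆ S → R T

section Recursion

variable {G : Type u} [Group G] {R : Finset G → Prop}

theorem allFinsets_closure_iUnion {ι : Type*} {S : ι → Set G} (hS : Directed (· ⊆ ·) S)
    (hbot : AllFinsets R (⊥ : Subgroup G)) (h : ∀ i, AllFinsets R (Subgroup.closure (S i))) :
    AllFinsets R (Subgroup.closure (⋃ i, S i)) := by
  rw [Subgroup.closure_iUnion]
  rcases isEmpty_or_nonempty ι with hι | hι
  · rwa [iSup_of_empty]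
  have hdir : Directed (· ≤ ·) fun i => Subgroup.closure (S i) := fun i j =>
    (hS i j).imp fun _ hk => ⟨Subgroup.closure_mono hk.1, Subgroup.closure_mono hk.2⟩
  intro T hT
  rw [Subgroup.coe_iSup_of_directed hdir] at hT
  obtain ⟨i, hi⟩ := Directed.exists_mem_subset_of_finset_subset_biUnion
    (f := fun i => (Subgroup.closure (S i) : Set G)) hdir hT
  exact h i T hi

theorem mk_closure_lt {κ : Cardinal.{u}} (hκ : ℵ₀ < κ) {S : Set G} (hS : #S < κ) :
    #(Subgroup.closure S) < κ := by
  classical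
  have hrange : (FreeGroup.lift ((↑) : S → G)).range = Subgroup.closure S := by
    rw [FreeGroup.range_lift_eq_closure, Subtype.range_coe]
  calc #(Subgroup.closure S)
      ≤ #(FreeGroup S) := hrange ▸ mk_le_of_surjective (MonoidHom.rangeRestrict_surjective _)
    _ ≤ #(List (S × Bool)) := mk_le_of_injective FreeGroup.toWord_injective
    _ ≤ max ℵ₀ #(S × Bool) := mk_list_le_max _
    _ < κ := by
      refine max_lt hκ ?_
      simpa using mul_lt_of_lt hκ.le hS ((natCast_lt_aleph0 (n := 2)).trans hκ)

variable {ι : Type u} [LinearOrder ι] [WellFoundedLT ι]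

noncomputable def transfiniteSeq (next : ι → Subgroup G → G) : ι → G :=
  WellFoundedLT.fix fun i g => next i (Subgroup.closure (range fun j : Iio i => g j j.2))

theorem transfiniteSeq_eq (next : ι → Subgroup G → G) (i : ι) :
    transfiniteSeq next i = next i (Subgroup.closure (transfiniteSeq next '' Iio i)) := by
  rw [image_eq_range]
  exact WellFoundedLT.fix_eq _ i

variable {κ : Cardinal.{u}} {Q : ι → G → Prop} {next : ι → Subgroup G → G}

theorem allFinsets_closure_transfiniteSeq_Iic (hκ : ℵ₀ < κ) (hι : ∀ i : ι, #(Iio i) < κ)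
    (hbot : AllFinsets R (⊥ : Subgroup G))
    (hnext : ∀ i (H : Subgroup G), #H < κ → AllFinsets R H →
      Q i (next i H) ∧ AllFinsets R ↑(H ⊔ Subgroup.zpowers (next i H))) (i : ι) :
    AllFinsets R (Subgroup.closure (transfiniteSeq next '' Iic i)) ∧
      Q i (transfiniteSeq next i) := by
  induction i using WellFoundedLT.induction with
  | _ i ih =>
  set g := transfiniteSeq next
  have hIio : g '' Iio i = ⋃ j : Iio i, g '' Iic j := by
    ext x
    simp only [mem_image, mem_iUnion, mem_Iio, mem_Iic, Subtype.exists, exists_prop]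
    exact ⟨fun ⟨k, hk, hx⟩ => ⟨k, hk, k, le_rfl, hx⟩,
      fun ⟨j, hj, k, hk, hx⟩ => ⟨k, hk.trans_lt hj, hx⟩⟩
  have hmono : Monotone fun j : Iio i => g '' Iic j := fun j j' h => image_mono (Iic_subset_Iic.2 h)
  have hlow : AllFinsets R (Subgroup.closure (g '' Iio i)) := by
    rw [hIio]
    exact allFinsets_closure_iUnion hmono.directed_le hbot fun j => (ih j j.2).1
  obtain ⟨hQ, hR⟩ := hnext i _ (mk_closure_lt hκ (mk_image_le.trans_lt (hι i))) hlow
  rw [← transfiniteSeq_eq next i] at hQ hR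
  refine ⟨?_, hQ⟩
  rwa [← Iio_union_right, image_union, image_singleton, Subgroup.closure_union,
    ← Subgroup.zpowers_eq_closure]

theorem exists_forall_and_allFinsets_closure_range (hκ : ℵ₀ < κ) (hι : ∀ i : ι, #(Iio i) < κ)
    (hbot : AllFinsets R (⊥ : Subgroup G))
    (step : ∀ i (H : Subgroup G), #H < κ → AllFinsets R H →
      ∃ g, Q i g ∧ AllFinsets R ↑(H ⊔ Subgroup.zpowers g)) :
    ∃ g : ι → G, (∀ i, Q i (g i)) ∧ AllFinsets R (Subgroup.closure (range g)) := by
  have hnext : ∀ i (H : Subgroup G), ∃ g, #H < κ → AllFinsets R H →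
      Q i g ∧ AllFinsets R ↑(H ⊔ Subgroup.zpowers g) := by
    intro i H
    by_cases h : #H < κ ∧ AllFinsets R H
    · obtain ⟨g, hg⟩ := step i H h.1 h.2
      exact ⟨g, fun _ _ => hg⟩
    · exact ⟨1, fun h₁ h₂ => absurd ⟨h₁, h₂⟩ h⟩
  choose next hnext using hnext
  have hstage := allFinsets_closure_transfiniteSeq_Iic hκ hι hbot hnext
  refine ⟨transfiniteSeq next, fun i => (hstage i).2, ?_⟩
  have hmono : Monotone fun j => transfiniteSeq next '' Iic j := fun j j' h =>
    image_mono (Iic_subset_Iic.2 h)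
  rw [← image_univ, ← iUnion_Iic, image_iUnion]
  exact allFinsets_closure_iUnion hmono.directed_le hbot fun j => (hstage j).1

end Recursion

namespace DenseSubgroup

-- the pairs of a partial map `q` read by the letters `g` (`b = true`) and `g⁻¹` (`b = false`)
def orient {Ω : Type*} (b : Bool) (x y : Ω) : Ω × Ω := cond b (x, y) (y, x)

theorem and_orient_iff {Ω : Type*} {P : Ω → Prop} (b : Bool) (x y : Ω) :
    P (orient b x y).1 ∧ P (orient b x y).2 ↔ P x ∧ P y := by
  cases b <;> simp [orient, and_comm]

def HasInfiniteExtensions {Ω : Type*} [DecidableEq Ω] (C : Set (Finset (Ω × Ω))) : Prop :=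
  ∀ q ∈ C, ∀ b x, (∀ y, orient b x y ∉ q) → {y | insert (orient b x y) q ∈ C}.Infinite

section PartialIso

variable {Ω α β : Type*} [LinearOrder α] [LinearOrder β]

def IsPartialIso (f₁ : Ω → α) (f₂ : Ω → β) (q : Finset (Ω × Ω)) : Prop :=
  ∀ p ∈ q, ∀ p' ∈ q, cmp (f₁ p.1) (f₁ p'.1) = cmp (f₂ p.2) (f₂ p'.2)

variable {f₁ : Ω → α} {f₂ : Ω → β} {q : Finset (Ω × Ω)}

theorem IsPartialIso.fst_eq_iff (hq : IsPartialIso f₁ f₂ q) (hf₁ : Injective f₁)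
    (hf₂ : Injective f₂) {p p' : Ω × Ω} (hp : p ∈ q) (hp' : p' ∈ q) : p.1 = p'.1 ↔ p.2 = p'.2 := by
  rw [← hf₁.eq_iff, ← hf₂.eq_iff, ← cmp_eq_eq_iff, hq p hp p' hp', cmp_eq_eq_iff]

theorem IsPartialIso.insert_of_cmp_eq [DecidableEq Ω] (hq : IsPartialIso f₁ f₂ q) {p : Ω × Ω}
    (hp : ∀ p' ∈ q, cmp (f₁ p.1) (f₁ p'.1) = cmp (f₂ p.2) (f₂ p'.2)) :
    IsPartialIso f₁ f₂ (insert p q) := by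
  intro r hr r' hr'
  rcases Finset.mem_insert.1 hr with rfl | hrq <;> rcases Finset.mem_insert.1 hr' with rfl | hrq'
  · rw [cmp_self_eq_eq, cmp_self_eq_eq]
  · exact hp r' hrq'
  · exact cmp_eq_cmp_symm.1 (hp r hrq)
  · exact hq r hrq r' hrq'

theorem isPartialIso_image_swap [DecidableEq Ω] :
    IsPartialIso f₂ f₁ (q.image Prod.swap) ↔ IsPartialIso f₁ f₂ q := by
  simp only [IsPartialIso, Finset.forall_mem_image, Prod.fst_swap, Prod.snd_swap]
  exact forall₂_congr fun _ _ => forall₂_congr fun _ _ => eq_comm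

theorem infinite_setOf_between_finsets [DenselyOrdered β] [NoMinOrder β] [NoMaxOrder β]
    [Nonempty β] (lo hi : Finset β) (h : ∀ x ∈ lo, ∀ y ∈ hi, x < y) :
    {m | (∀ x ∈ lo, x < m) ∧ ∀ y ∈ hi, m < y}.Infinite := by
  classical
  intro hfin
  obtain ⟨m, hlo, hhi⟩ := Order.exists_between_finsets lo (hi ∪ hfin.toFinset) fun x hx y hy =>
    (Finset.mem_union.1 hy).elim (h x hx y) fun hy => (hfin.mem_toFinset.1 hy).1 x hx
  have hm : (∀ x ∈ lo, x < m) ∧ ∀ y ∈ hi, m < y :=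
    ⟨hlo, fun y hy => hhi y (Finset.mem_union_left _ hy)⟩
  exact lt_irrefl m (hhi m (Finset.mem_union_right _ (hfin.mem_toFinset.2 hm)))

variable [DecidableEq Ω] [DenselyOrdered β] [NoMinOrder β] [NoMaxOrder β] [Nonempty β]

theorem IsPartialIso.infinite_setOf_insert (hq : IsPartialIso f₁ f₂ q) (hf₁ : Injective f₁)
    (hf₂ : Surjective f₂) {x : Ω} (hx : ∀ p ∈ q, p.1 ≠ x) :
    {y | IsPartialIso f₁ f₂ (insert (x, y) q)}.Infinite := by
  -- the admissible images of `x` are the preimages of an interval cut out by images of `q`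
  let lo := (q.filter fun p => f₁ p.1 < f₁ x).image (f₂ ∘ Prod.snd)
  let hi := (q.filter fun p => f₁ x < f₁ p.1).image (f₂ ∘ Prod.snd)
  have hlohi : ∀ a ∈ lo, ∀ b ∈ hi, a < b := by
    simp only [lo, hi, Finset.mem_image, Finset.mem_filter]
    rintro _ ⟨p, ⟨hp, hpx⟩, rfl⟩ _ ⟨p', ⟨hp', hxp'⟩, rfl⟩
    exact (lt_iff_lt_of_cmp_eq_cmp (hq p hp p' hp')).1 (hpx.trans hxp')
  refine Infinite.of_image f₂ ((infinite_setOf_between_finsets lo hi hlohi).mono ?_)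
  rintro m ⟨hlo, hhi⟩
  obtain ⟨y, rfl⟩ := hf₂ m
  refine ⟨y, hq.insert_of_cmp_eq fun p hp => ?_, rfl⟩
  rcases lt_trichotomy (f₁ x) (f₁ p.1) with h | h | h
  · rw [(cmp_eq_lt_iff _ _).2 h]
    exact ((cmp_eq_lt_iff _ _).2 (hhi _ (Finset.mem_image_of_mem _ (by simpa [hp])))).symm
  · exact absurd (hf₁ h).symm (hx p hp)
  · rw [(cmp_eq_gt_iff _ _).2 h]
    exact ((cmp_eq_gt_iff _ _).2 (hlo _ (Finset.mem_image_of_mem _ (by simpa [hp])))).symm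

theorem IsPartialIso.infinite_setOf_insert_orient [DenselyOrdered α] [NoMinOrder α]
    [NoMaxOrder α] [Nonempty α] (hq : IsPartialIso f₁ f₂ q) (hf₁ : Bijective f₁)
    (hf₂ : Bijective f₂) (b : Bool) {x : Ω} (hx : ∀ y, orient b x y ∉ q) :
    {y | IsPartialIso f₁ f₂ (insert (orient b x y) q)}.Infinite := by
  cases b
  · have hq' := isPartialIso_image_swap.2 hq
    convert hq'.infinite_setOf_insert hf₂.1 hf₁.2 (x := x) _ using 3 with y
    · rw [← isPartialIso_image_swap (f₁ := f₁), Finset.image_insert]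
      rfl
    · simp only [Finset.mem_image]
      rintro _ ⟨p, hp, rfl⟩ rfl
      exact hx p.1 hp
  · exact hq.infinite_setOf_insert hf₁.1 hf₂.2 fun p hp h => hx p.2 (h ▸ hp)

end PartialIso

section Words

variable {Ω ι : Type*} (φ : ι → Perm Ω) (q : Finset (Ω × Ω))

-- the letters of a word as permutations, with the generic letter `none` contributing `1`
def letterPerm : Option ι × Bool → Perm Ω
  | (some i, b) => cond b (φ i) (φ i)⁻¹
  | (none, _) => 1

def LetterRel : Option ι × Bool → Ω → Ω → Prop
  | (some i, b), x, y => y = cond b (φ i) (φ i)⁻¹ x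
  | (none, b), x, y => orient b x y ∈ q

-- `WordRel φ q L x y`: evaluating `L` at `x` as `FreeGroup.lift` does (last letter first), with
-- `some i ↦ φ i` and `none ↦` the partial map `q`, can end at `y`
def WordRel : List (Option ι × Bool) → Ω → Ω → Prop
  | [], x, y => y = x
  | l :: L, x, y => ∃ z, WordRel L x z ∧ LetterRel φ q l z y

variable {φ q} {q' : Finset (Ω × Ω)}

theorem LetterRel.mono (h : q ⊆ q') {l : Option ι × Bool} {x y : Ω} (hl : LetterRel φ q l x y) :
    LetterRel φ q' l x y := by
  obtain ⟨_ | i, b⟩ := l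
  exacts [h hl, hl]

theorem WordRel.mono (h : q ⊆ q') :
    ∀ {L : List (Option ι × Bool)} {x y : Ω}, WordRel φ q L x y → WordRel φ q' L x y
  | [], _, _, hL => hL
  | _ :: _, _, _, ⟨z, hL, hl⟩ => ⟨z, hL.mono h, hl.mono h⟩

variable {g : Perm Ω}

theorem LetterRel.apply_eq (hg : ∀ p ∈ q, g p.1 = p.2) {l : Option ι × Bool} {x y : Ω}
    (hl : LetterRel φ q l x y) : cond l.2 (l.1.elim' g φ) (l.1.elim' g φ)⁻¹ x = y := by
  obtain ⟨_ | i, _ | _⟩ := l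
  · exact g.symm_apply_eq.2 (hg _ hl).symm
  · exact hg _ hl
  · exact hl.symm
  · exact hl.symm

theorem WordRel.lift_mk_apply (hg : ∀ p ∈ q, g p.1 = p.2) :
    ∀ {L : List (Option ι × Bool)} {x y : Ω}, WordRel φ q L x y →
      FreeGroup.lift (Option.elim' g φ) (FreeGroup.mk L) x = y
  | [], _, _, hL => hL.symm
  | l :: L, x, _, ⟨z, hL, hl⟩ => by
    have hz := hL.lift_mk_apply hg
    rw [FreeGroup.lift_mk] at hz ⊢
    rw [List.map_cons, List.prod_cons, Perm.mul_apply, hz]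
    exact hl.apply_eq hg

end Words

section Clean

variable {Ω ι : Type*} [DecidableEq (Perm Ω)] {φ : ι → Perm Ω}

def Clean (Λ : Finset (Perm Ω)) (B : Finset Ω) (k : ℕ) (x : Ω) : Prop :=
  ∀ π ∈ Λ ^ k, π x ∉ B

variable {Λ : Finset (Perm Ω)} {B : Finset Ω} {k m : ℕ} {x : Ω}

theorem Clean.mono (hΛ : 1 ∈ Λ) (hkm : k ≤ m) (h : Clean Λ B m x) : Clean Λ B k x :=
  fun π hπ => h π (Finset.pow_subset_pow_right hΛ hkm hπ)

theorem Clean.apply {u : Perm Ω} (hu : u ∈ Λ) (h : Clean Λ B (k + 1) x) : Clean Λ B k (u x) :=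
  fun π hπ => by simpa using h (π * u) (by rw [pow_succ]; exact Finset.mul_mem_mul hπ hu)

theorem Clean.notMem (hΛ : 1 ∈ Λ) (h : Clean Λ B k x) : x ∉ B := by
  simpa using h 1 (Finset.one_mem_pow hΛ)

theorem finite_setOf_not_clean (Λ : Finset (Perm Ω)) (B : Finset Ω) (k : ℕ) :
    {x | ¬Clean Λ B k x}.Finite := by
  refine ((Λ ^ k).finite_toSet.biUnion fun π _ =>
    B.finite_toSet.preimage π.injective.injOn).subset ?_
  intro x hx
  simp only [Clean, not_forall, not_not, mem_ofPred_eq] at hx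
  obtain ⟨π, hπ, hx⟩ := hx
  exact mem_biUnion hπ hx

variable (Λ B) in
def CleanExt (C : Set (Finset (Ω × Ω))) (q₀ : Finset (Ω × Ω)) (k : ℕ) (q : Finset (Ω × Ω)) :
    Prop :=
  q ∈ C ∧ ∀ p ∈ q, p ∉ q₀ → Clean Λ B k p.1 ∧ Clean Λ B k p.2

variable {C : Set (Finset (Ω × Ω))} {q₀ q : Finset (Ω × Ω)}

theorem CleanExt.mono (hΛ : 1 ∈ Λ) (hkm : k ≤ m) (h : CleanExt Λ B C q₀ m q) :
    CleanExt Λ B C q₀ k q :=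
  ⟨h.1, fun p hp hp₀ => (h.2 p hp hp₀).imp (Clean.mono hΛ hkm) (Clean.mono hΛ hkm)⟩

variable [DecidableEq Ω]

theorem exists_letterRel (hΛ : 1 ∈ Λ) (hB₀ : ∀ p ∈ q₀, p.1 ∈ B ∧ p.2 ∈ B)
    (hext : HasInfiniteExtensions C)
    {l : Option ι × Bool} (hl : letterPerm φ l ∈ Λ) (hq : CleanExt Λ B C q₀ (k + 1) q)
    (hx : Clean Λ B (k + 1) x) :
    ∃ q' y, q ⊆ q' ∧ CleanExt Λ B C q₀ k q' ∧ Clean Λ B k y ∧ LetterRel φ q' l x y := by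
  obtain ⟨_ | i, b⟩ := l
  · -- a pair at a clean point was added by the construction, so its other end is clean too
    have hnew : ∀ y, orient b x y ∉ q₀ := fun y hy =>
      hx.notMem hΛ ((and_orient_iff (P := (· ∈ B)) b x y).1 (hB₀ _ hy)).1
    by_cases hdef : ∃ y, orient b x y ∈ q
    · obtain ⟨y, hy⟩ := hdef
      have hy' := ((and_orient_iff b x y).1 (hq.2 _ hy (hnew y))).2
      exact ⟨q, y, subset_rfl, hq.mono hΛ k.le_succ, hy'.mono hΛ k.le_succ, hy⟩
    · push Not at hdef
      obtain ⟨y, hyC, hy⟩ := ((hext q hq.1 b x hdef).sdiff (finite_setOf_not_clean Λ B k)).nonempty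
      rw [mem_ofPred_eq, not_not] at hy
      refine ⟨_, y, Finset.subset_insert _ _, ⟨hyC, fun p hp hp₀ => ?_⟩, hy,
        Finset.mem_insert_self _ _⟩
      rcases Finset.mem_insert.1 hp with rfl | hp
      · exact (and_orient_iff b x y).2 ⟨hx.mono hΛ k.le_succ, hy⟩
      · exact ((hq.mono hΛ k.le_succ).2 p hp hp₀)
  · exact ⟨q, _, subset_rfl, hq.mono hΛ k.le_succ, hx.apply hl, rfl⟩

theorem exists_wordRel (hΛ : 1 ∈ Λ) (hB₀ : ∀ p ∈ q₀, p.1 ∈ B ∧ p.2 ∈ B)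
    (hext : HasInfiniteExtensions C) :
    ∀ {L : List (Option ι × Bool)} {k : ℕ} {q : Finset (Ω × Ω)} {x : Ω},
      (∀ l ∈ L, letterPerm φ l ∈ Λ) → CleanExt Λ B C q₀ (L.length + k) q →
      Clean Λ B (L.length + k) x →
      ∃ q' y, q ⊆ q' ∧ CleanExt Λ B C q₀ k q' ∧ Clean Λ B k y ∧ WordRel φ q' L x y
  | [], k, q, x, _, hq, hx => ⟨q, x, subset_rfl, by simpa using hq, by simpa using hx, rfl⟩
  | l :: L, k, q, x, hL, hq, hx => by
    rw [List.length_cons, add_assoc, add_comm 1 k] at hq hx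
    obtain ⟨q₁, z, hqq₁, hq₁, hz, hLz⟩ :=
      exists_wordRel hΛ hB₀ hext (fun l' hl' => hL l' (List.mem_cons_of_mem l hl')) hq hx
    obtain ⟨q₂, y, hq₁q₂, hq₂, hy, hly⟩ :=
      exists_letterRel hΛ hB₀ hext (hL l List.mem_cons_self) hq₁ hz
    exact ⟨q₂, y, hqq₁.trans hq₁q₂, hq₂, hy, z, hLz.mono hq₁q₂, hly⟩

theorem exists_forall_wordRel (hΛ : 1 ∈ Λ) (hB₀ : ∀ p ∈ q₀, p.1 ∈ B ∧ p.2 ∈ B)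
    (hext : HasInfiniteExtensions C) :
    ∀ {Ls : List (List (Option ι × Bool))} {q : Finset (Ω × Ω)} {x : Ω},
      (∀ L ∈ Ls, ∀ l ∈ L, letterPerm φ l ∈ Λ) → CleanExt Λ B C q₀ (Ls.map List.length).sum q →
      Clean Λ B (Ls.map List.length).sum x →
      ∃ q', q ⊆ q' ∧ q' ∈ C ∧ ∀ L ∈ Ls, ∃ y, WordRel φ q' L x y ∧ y ∉ B
  | [], q, _, _, hq, _ => ⟨q, subset_rfl, hq.1, by simp⟩
  | L :: Ls, q, x, hLs, hq, hx => by
    rw [List.map_cons, List.sum_cons] at hq hx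
    obtain ⟨q₁, y, hqq₁, hq₁, hy, hLy⟩ :=
      exists_wordRel hΛ hB₀ hext (hLs L List.mem_cons_self) hq hx
    obtain ⟨q', hq₁q', hq'C, hLs'⟩ := exists_forall_wordRel hΛ hB₀ hext
      (fun L' hL' => hLs L' (List.mem_cons_of_mem L hL')) hq₁ (hx.mono hΛ (Nat.le_add_left _ _))
    refine ⟨q', hqq₁.trans hq₁q', hq'C, ?_⟩
    rintro L' (_ | ⟨_, hL'⟩)
    · exact ⟨y, hLy.mono hq₁q', hy.notMem hΛ⟩
    · exact hLs' L' hL'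

end Clean

theorem exists_equiv_of_rel {α β : Type*} {r : α → β → Prop} (htot : ∀ x, ∃ y, r x y)
    (hsurj : ∀ y, ∃ x, r x y) (hinj : ∀ {x y x' y'}, r x y → r x' y' → (x = x' ↔ y = y')) :
    ∃ e : α ≃ β, ∀ x y, r x y → e x = y := by
  choose f hf using htot
  have hbij : Bijective f := ⟨fun x x' h => (hinj (hf x) (hf x')).2 h, fun y =>
    let ⟨x, hx⟩ := hsurj y
    ⟨x, (hinj (hf x) hx).1 rfl⟩⟩
  exact ⟨Equiv.ofBijective f hbij, fun x y h => (hinj (hf x) h).1 rfl⟩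

theorem range_lift_elim' {G : Type*} [Group G] (H : Subgroup G) (g : G) :
    (FreeGroup.lift (Option.elim' g ((↑) : H → G))).range = H ⊔ Subgroup.zpowers g := by
  rw [FreeGroup.range_lift_eq_closure]
  refine le_antisymm ((Subgroup.closure_le _).2 ?_) (sup_le (fun h hh => ?_) ?_)
  · rintro _ ⟨_ | h, rfl⟩
    exacts [Subgroup.mem_sup_right (Subgroup.mem_zpowers g), Subgroup.mem_sup_left h.2]
  · exact Subgroup.subset_closure ⟨some ⟨h, hh⟩, rfl⟩
  · exact Subgroup.zpowers_le.2 (Subgroup.subset_closure ⟨none, rfl⟩)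

theorem letterPerm_mem {G : Type*} (H : Subgroup (Perm G)) (l : Option H × Bool) :
    letterPerm ((↑) : H → Perm G) l ∈ H := by
  obtain ⟨_ | h, _ | _⟩ := l
  exacts [H.one_mem, H.one_mem, H.inv_mem h.2, h.2]

section Step

variable {Ω : Type}

def DisagreesOften (f₀ : Perm Ω) (T : Finset (Perm Ω)) : Prop :=
  {a | ∀ π ∈ T, π a ≠ f₀ a}.Infinite

theorem exists_perm_of_directedOn {C : Set (Finset (Ω × Ω))}
    (hinj : ∀ q ∈ C, ∀ p ∈ q, ∀ p' ∈ q, p.1 = p'.1 ↔ p.2 = p'.2) {Q : Set C}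
    (hQ : DirectedOn (· ≤ ·) Q) (hside : ∀ b x, ∃ q ∈ Q, ∃ y, orient b x y ∈ q.1) :
    ∃ g : Perm Ω, ∀ q ∈ Q, ∀ p ∈ q.1, g p.1 = p.2 := by
  obtain ⟨g, hg⟩ := exists_equiv_of_rel (r := fun x y => ∃ q ∈ Q, (x, y) ∈ q.1)
    (fun x => let ⟨q, hq, y, hy⟩ := hside true x; ⟨y, q, hq, hy⟩)
    (fun y => let ⟨q, hq, x, hx⟩ := hside false y; ⟨x, q, hq, hx⟩)
    (fun ⟨q, hq, hp⟩ ⟨q', hq', hp'⟩ =>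
      let ⟨r, _, hqr, hq'r⟩ := hQ q hq q' hq'
      hinj r.1 r.2 _ (hqr hp) _ (hq'r hp'))
  exact ⟨g, fun q hq p hp => hg _ _ ⟨q, hq, hp⟩⟩

abbrev DenseIndex (H : Subgroup (Perm Ω)) := (Bool × Ω) ⊕ (Finset (FreeGroup (Option H)) × Finset Ω)

theorem mk_denseIndex_lt [Countable Ω] {H : Subgroup (Perm Ω)} (hH : #H < 𝔠) :
    #(DenseIndex H) < 𝔠 := by
  have hc : ∀ (X : Type) [Countable X], #X < 𝔠 := fun X _ =>
    mk_le_aleph0.trans_lt aleph0_lt_continuum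
  have hW : #(Finset (FreeGroup (Option H))) < 𝔠 := by
    rw [mk_finset_of_infinite, mk_freeGroup, mk_option]
    exact max_lt (add_lt_of_lt aleph0_le_continuum hH (one_lt_aleph0.trans aleph0_lt_continuum))
      aleph0_lt_continuum
  simp only [DenseIndex, mk_sum, mk_prod, lift_id]
  exact add_lt_of_lt aleph0_le_continuum (hc _) (mul_lt_of_lt aleph0_le_continuum hW (hc _))

variable [DecidableEq Ω] {f₀ : Perm Ω} {H : Subgroup (Perm Ω)} {C : Set (Finset (Ω × Ω))}

theorem exists_le_forall_wordRel_ne [DecidableEq (Perm Ω)] (hHf : AllFinsets (DisagreesOften f₀) H)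
    (hext : HasInfiniteExtensions C) {q : Finset (Ω × Ω)} (hq : q ∈ C)
    (W : Finset (FreeGroup (Option H))) (F : Finset Ω) :
    ∃ q', q ⊆ q' ∧ q' ∈ C ∧ ∃ a ∉ F, ∀ w ∈ W, ∃ y, WordRel (↑) q' w.toWord a y ∧ y ≠ f₀ a := by
  let Ls := W.toList.map FreeGroup.toWord
  let Λ := insert 1 ((W.biUnion fun w => w.toWord.toFinset).image (letterPerm ((↑) : H → Perm Ω)))
  have hLs : ∀ L ∈ Ls, ∀ l ∈ L, letterPerm (↑) l ∈ Λ := by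
    simp only [Ls, List.mem_map, Finset.mem_toList]
    rintro _ ⟨w, hw, rfl⟩ l hl
    exact Finset.mem_insert_of_mem (Finset.mem_image_of_mem _
      (Finset.mem_biUnion.2 ⟨w, hw, List.mem_toFinset.2 hl⟩))
  have hΛH : ↑(Λ ^ (Ls.map List.length).sum) ⊆ (H : Set (Perm Ω)) := by
    rw [Finset.coe_pow]
    refine Subgroup.pow_subset fun π hπ => ?_
    obtain rfl | ⟨l, -, rfl⟩ := Finset.mem_insert.1 hπ |>.imp_right Finset.mem_image.1
    exacts [H.one_mem, letterPerm_mem H l]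
  have hinf : {a | ∀ π ∈ Λ ^ (Ls.map List.length).sum, π a ≠ f₀ a}.Infinite := hHf _ hΛH
  let D := q.image Prod.fst ∪ q.image Prod.snd
  obtain ⟨a, ⟨ha, hDa⟩, haF⟩ :=
    ((hinf.sdiff (finite_setOf_not_clean Λ D _)).sdiff F.finite_toSet).nonempty
  rw [mem_ofPred_eq, not_not] at hDa
  have hclean : Clean Λ (insert (f₀ a) D) _ a := fun π hπ h =>
    (Finset.mem_insert.1 h).elim (ha π hπ) (hDa π hπ)
  have hB₀ : ∀ p ∈ q, p.1 ∈ insert (f₀ a) D ∧ p.2 ∈ insert (f₀ a) D := fun p hp => by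
    simp only [D, Finset.mem_insert, Finset.mem_union, Finset.mem_image]
    exact ⟨Or.inr (Or.inl ⟨p, hp, rfl⟩), Or.inr (Or.inr ⟨p, hp, rfl⟩)⟩
  obtain ⟨q', hqq', hq'C, hall⟩ := exists_forall_wordRel (Finset.mem_insert_self 1 _) hB₀ hext
    hLs ⟨hq, fun p hp hp₀ => absurd hp hp₀⟩ hclean
  refine ⟨q', hqq', hq'C, a, haF, fun w hw => ?_⟩
  obtain ⟨y, hy, hyB⟩ := hall _ (List.mem_map_of_mem (Finset.mem_toList.2 hw))
  exact ⟨y, hy, fun h => hyB (h ▸ Finset.mem_insert_self _ _)⟩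

theorem exists_perm_generic (hMA : MASigmaCentered) [Countable Ω] (hH : #H < 𝔠)
    (hHf : AllFinsets (DisagreesOften f₀) H) (hC : C.Nonempty)
    (hinj : ∀ q ∈ C, ∀ p ∈ q, ∀ p' ∈ q, p.1 = p'.1 ↔ p.2 = p'.2) (hext : HasInfiniteExtensions C) :
    ∃ g : Perm Ω, (∀ x y, ∃ q ∈ C, (x, g x) ∈ q ∧ (y, g y) ∈ q) ∧
      AllFinsets (DisagreesOften f₀) ↑(H ⊔ Subgroup.zpowers g) := by
  classical
  have : Nonempty C := hC.to_subtype
  -- a filter meeting `D (b, x)` decides `g x` and `g⁻¹ x`; one meeting `D (W, F)` makes every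
  -- word of `W` differ from `f₀` at a point outside `F`
  let D : DenseIndex H → Set C
    | .inl (b, x) => {q | ∃ y, orient b x y ∈ q.1}
    | .inr (W, F) => {q | ∃ a ∉ F, ∀ w ∈ W, ∃ y, WordRel (↑) q.1 w.toWord a y ∧ y ≠ f₀ a}
  have hD : ∀ j (q : C), ∃ q' ∈ D j, q ≤ q' := by
    rintro (⟨b, x⟩ | ⟨W, F⟩) ⟨q, hq⟩
    · by_cases h : ∃ y, orient b x y ∈ q
      · exact ⟨⟨q, hq⟩, h, le_rfl⟩
      · push Not at h
        obtain ⟨y, hy⟩ := (hext q hq b x h).nonempty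
        exact ⟨⟨_, hy⟩, ⟨y, Finset.mem_insert_self _ _⟩, Finset.subset_insert _ _⟩
    · obtain ⟨q', hqq', hq'C, hW⟩ := exists_le_forall_wordRel_ne hHf hext hq W F
      exact ⟨⟨q', hq'C⟩, hW, hqq'⟩
  obtain ⟨Q, hQ, hmeet⟩ :=
    hMA.exists_directedOn (sigmaCentered_of_countable C) D (mk_denseIndex_lt hH) hD
  obtain ⟨g, hg⟩ := exists_perm_of_directedOn hinj hQ fun b x =>
    (hmeet (.inl (b, x))).imp fun _ hq => ⟨hq.1, hq.2⟩
  refine ⟨g, fun x y => ?_, fun T hT => ?_⟩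
  · obtain ⟨qx, hqx, x', hx'⟩ := hmeet (.inl (true, x))
    obtain ⟨qy, hqy, y', hy'⟩ := hmeet (.inl (true, y))
    obtain ⟨q, -, hxq, hyq⟩ := hQ qx hqx qy hqy
    have hgx : g x = x' := hg qx hqx _ hx'
    have hgy : g y = y' := hg qy hqy _ hy'
    exact ⟨q, q.2, hgx ▸ hxq hx', hgy ▸ hyq hy'⟩
  · rw [← range_lift_elim', MonoidHom.coe_range, ← image_univ] at hT
    obtain ⟨W, -, rfl⟩ := Finset.subset_set_image_iff.1 hT
    intro hfin
    obtain ⟨q, hq, a, haF, hall⟩ := hmeet (.inr (W, hfin.toFinset))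
    refine haF (hfin.mem_toFinset.2 (Finset.forall_mem_image.2 fun w hw => ?_))
    obtain ⟨y, hy, hne⟩ := hall w hw
    rwa [← FreeGroup.mk_toWord (x := w), hy.lift_mk_apply (hg q hq)]

end Step

section Main

variable {Ω : Type}

theorem exists_perm_iso_generic (hMA : MASigmaCentered) [Countable Ω] [DecidableEq Ω] {α : Type*}
    [LinearOrder α] [DenselyOrdered α] [NoMinOrder α] [NoMaxOrder α] [Nonempty α] {f₀ : Perm Ω}
    {H : Subgroup (Perm Ω)} (hH : #H < 𝔠) (hHf : AllFinsets (DisagreesOften f₀) H)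
    (e₁ e₂ : Ω ≃ α) (S : Finset Ω) :
    ∃ g : Perm Ω, (∀ a b, e₂ (g a) < e₂ (g b) ↔ e₁ a < e₁ b) ∧ (∀ x ∈ S, g x = e₂.symm (e₁ x)) ∧
      AllFinsets (DisagreesOften f₀) ↑(H ⊔ Subgroup.zpowers g) := by
  let C := {q : Finset (Ω × Ω) | IsPartialIso e₁ e₂ q ∧ ∀ x ∈ S, (x, e₂.symm (e₁ x)) ∈ q}
  have hS : IsPartialIso e₁ e₂ (S.image fun x => (x, e₂.symm (e₁ x))) := by
    simp [IsPartialIso]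
  obtain ⟨g, hgC, hgf⟩ := exists_perm_generic hMA hH hHf (C := C)
    ⟨_, hS, fun x hx => Finset.mem_image_of_mem _ hx⟩
    (fun q hq p hp p' hp' => hq.1.fst_eq_iff e₁.injective e₂.injective hp hp')
    (fun q hq b x hx => (hq.1.infinite_setOf_insert_orient e₁.bijective e₂.bijective b hx).mono
      fun y hy => ⟨hy, fun x' hx' => Finset.mem_insert_of_mem (hq.2 x' hx')⟩)
  refine ⟨g, fun a b => ?_, fun x hx => ?_, hgf⟩
  · obtain ⟨q, hq, ha, hb⟩ := hgC a b
    exact (lt_iff_lt_of_cmp_eq_cmp (hq.1 _ ha _ hb)).symm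
  · obtain ⟨q, hq, hx', -⟩ := hgC x x
    exact (hq.1.fst_eq_iff e₁.injective e₂.injective hx' (hq.2 x hx)).1 rfl

theorem mk_task_le [Countable Ω] [Infinite Ω] : #((Ω ≃ ℚ) × (Ω ≃ ℚ) × Finset Ω) ≤ 𝔠 := by
  have hE : #(Ω ≃ ℚ) ≤ 𝔠 := by
    refine (mk_le_of_injective DFunLike.coe_injective).trans ?_
    rw [mk_arrow, mk_eq_aleph0 Ω, mk_eq_aleph0 ℚ, lift_aleph0, aleph0_power_aleph0]
  simp only [mk_prod, lift_id]
  calc #(Ω ≃ ℚ) * (#(Ω ≃ ℚ) * #(Finset Ω)) ≤ 𝔠 * (𝔠 * 𝔠) :=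
        mul_le_mul' hE (mul_le_mul' hE (mk_le_aleph0.trans aleph0_le_continuum))
    _ = 𝔠 := by rw [continuum_mul_self, continuum_mul_self]

theorem exists_subgroup_forall_exists_iso (hMA : MASigmaCentered) [Countable Ω] [Infinite Ω] :
    ∃ (G : Subgroup (Perm Ω)) (f₀ : Perm Ω), f₀ ∉ G ∧ ∀ (e₁ e₂ : Ω ≃ ℚ) (S : Finset Ω),
      ∃ g ∈ G, (∀ a b, e₂ (g a) < e₂ (g b) ↔ e₁ a < e₁ b) ∧ ∀ x ∈ S, g x = e₂.symm (e₁ x) := by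
  classical
  obtain ⟨e₀⟩ := nonempty_equiv_of_countable (α := Ω) (β := ℚ)
  let f₀ : Perm Ω := e₀.trans ((Equiv.addRight 1).trans e₀.symm)
  have hf₀ : ∀ a, f₀ a ≠ a := fun a h => by simp [f₀, Equiv.symm_apply_eq] at h
  have hbot : AllFinsets (DisagreesOften f₀) (⊥ : Subgroup (Perm Ω)) := fun T hT => by
    refine Set.infinite_univ.mono fun a _ π hπ => ?_
    rw [show π = 1 from hT hπ]
    exact (hf₀ a).symm
  obtain ⟨emb⟩ : Nonempty ((Ω ≃ ℚ) × (Ω ≃ ℚ) × Finset Ω ↪ (ord 𝔠).ToType) :=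
    (le_def _ _).1 (mk_task_le.trans_eq (mk_ord_toType 𝔠).symm)
  have : Nonempty ((Ω ≃ ℚ) × (Ω ≃ ℚ) × Finset Ω) := ⟨(e₀, e₀, ∅)⟩
  let s := Function.invFun emb
  obtain ⟨g, hgQ, hgR⟩ := exists_forall_and_allFinsets_closure_range (ι := (ord 𝔠).ToType)
    aleph0_lt_continuum (fun i => by simpa using mk_Iio_lt i) hbot
    (Q := fun i g => (∀ a b, (s i).2.1 (g a) < (s i).2.1 (g b) ↔ (s i).1 a < (s i).1 b) ∧
      ∀ x ∈ (s i).2.2, g x = (s i).2.1.symm ((s i).1 x))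
    fun i H hH hHf => (exists_perm_iso_generic hMA hH hHf _ _ _).imp fun g hg =>
      ⟨⟨hg.1, hg.2.1⟩, hg.2.2⟩
  refine ⟨Subgroup.closure (range g), f₀, fun hf₀G => ?_, fun e₁ e₂ S => ?_⟩
  · simpa [DisagreesOften] using hgR {f₀} (by simpa using hf₀G)
  · obtain ⟨i, hi⟩ := Function.invFun_surjective emb.injective (e₁, e₂, S)
    have hgi := hgQ i
    simp only [s, hi] at hgi
    exact ⟨g i, Subgroup.subset_closure (mem_range_self i), hgi⟩

end Main

end DenseSubgroup

/-- (MA(σ-centered)) There exists a proper dense subgroup `G < Sym(Ω)` (Ω countably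
infinite) which is transitive on `Ω` and acts transitively on the set of linear orders on `Ω`
of order type `ℚ`, by transport of structure. -/
theorem stmt_16 (Ω : Type) [Countable Ω] [Infinite Ω] (hMA : MASigmaCentered) :
    ∃ G : Subgroup (Equiv.Perm Ω), G ≠ ⊤ ∧
      (∀ h : Equiv.Perm Ω, ∀ S : Finset Ω, ∃ g ∈ G, ∀ a ∈ S, g a = h a) ∧
      (∀ a b : Ω, ∃ g ∈ G, g a = b) ∧
      ∀ r₁ r₂ : Ω → Ω → Prop, QOrder r₁ → QOrder r₂ →
        ∃ g ∈ G, ∀ a b : Ω, r₂ (g a) (g b) ↔ r₁ a b := by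
  classical
  obtain ⟨G, f₀, hf₀, hG⟩ := DenseSubgroup.exists_subgroup_forall_exists_iso hMA (Ω := Ω)
  obtain ⟨e₀⟩ := nonempty_equiv_of_countable (α := Ω) (β := ℚ)
  -- for `e₂ = h.symm.trans e₀` the map `e₂.symm ∘ e₀` is `h`
  have hdense : ∀ (h : Perm Ω) (S : Finset Ω), ∃ g ∈ G, ∀ a ∈ S, g a = h a := fun h S =>
    let ⟨g, hg, _, hgS⟩ := hG e₀ (h.symm.trans e₀) S
    ⟨g, hg, fun a ha => by simpa using hgS a ha⟩
  refine ⟨G, fun hG => hf₀ (hG ▸ Subgroup.mem_top f₀), hdense, fun a b => ?_,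
    fun r₁ r₂ h₁ h₂ => ?_⟩
  · obtain ⟨g, hg, hga⟩ := hdense (Equiv.swap a b) {a}
    exact ⟨g, hg, by simpa using hga a (Finset.mem_singleton_self a)⟩
  · obtain ⟨e₁, he₁⟩ := h₁.exists_equiv_rat
    obtain ⟨e₂, he₂⟩ := h₂.exists_equiv_rat
    obtain ⟨g, hg, hiso, -⟩ := hG e₁ e₂ ∅
    exact ⟨g, hg, fun a b => by rw [he₁, he₂, hiso]⟩
end
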